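/- arXiv:2011.00029 — 13 statements merged into one kernel-verified Lean document; each statement's English description precedes it below -/
import Mathlib

section
/- Let M be a distance-edge-monitoring set of a connected graph G. Then for any two distinct edges e and e' of G, the sets P(M,e) and P(M,e') are distinct. -/
open SimpleGraph

/-- `e` is monitored by vertex `x` in `G`: some vertex `y` has its distance to `x`
changed when `e` is deleted (distances in `ℕ∞`, `⊤` if disconnected). -/
def monitors {V : Type*} (G : SimpleGraph V) (x : V) (e : Sym2 V) : Prop :=
  ∃ y : V, G.edist x y ≠ (G.deleteEdges {e}).edist x y

/-- `M` is a distance-edge-monitoring set of `G`. -/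
def IsDEMSet {V : Type*} (G : SimpleGraph V) (M : Set V) : Prop :=
  ∀ e ∈ G.edgeSet, ∃ x ∈ M, monitors G x e

/-- The smallest size of a distance-edge-monitoring set of `G`. -/
noncomputable def dem (V : Type*) [Fintype V] (G : SimpleGraph V) : ℕ :=
  sInf {k | ∃ M : Finset V, M.card = k ∧ IsDEMSet G ↑M}

/-- The set `P(M, e)` of pairs `(x, y)`, `x ∈ M`, whose distance changes when `e` is deleted. -/
def pairs {V : Type*} (G : SimpleGraph V) (M : Set V) (e : Sym2 V) : Set (V × V) :=
  {p | p.1 ∈ M ∧ G.edist p.1 p.2 ≠ (G.deleteEdges {e}).edist p.1 p.2}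

/-- `C` is a vertex cover of `G`. -/
def IsVC {V : Type*} (G : SimpleGraph V) (C : Set V) : Prop :=
  ∀ e ∈ G.edgeSet, ∃ v ∈ C, v ∈ e

/-- The vertex cover number of `G`. -/
noncomputable def vcNum (V : Type*) [Fintype V] (G : SimpleGraph V) : ℕ :=
  sInf {k | ∃ C : Finset V, C.card = k ∧ IsVC G ↑C}

/-- The feedback edge set number: minimum number of edges whose deletion leaves a forest. -/
noncomputable def fes (V : Type*) [Fintype V] (G : SimpleGraph V) : ℕ :=
  sInf {k | ∃ F : Finset (Sym2 V), F.card = k ∧ (G.deleteEdges ↑F).IsAcyclic}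

/-!
Fix `x ∈ M` with `(x, y) ∈ P(M, e')`; then `P(M, e) = P(M, e')` makes the vertices whose distance
from `x` changes the same for `e` and `e'`. Let `w` be such a vertex nearest to `x`, and `p` a
shortest `x`–`w` walk. An edge whose deletion changes `d(x, w)` lies on `p`; if it were not the last
edge of `p`, its far endpoint would be a vertex nearer to `x` whose distance also changes. So both
`e` and `e'` are the last edge of `p`.
-/

namespace SimpleGraph

variable {V : Type*} {G : SimpleGraph V} {x y w : V} {e : Sym2 V}

theorem Walk.exists_eq_append_cons_of_mem_edges (p : G.Walk x y) (he : e ∈ p.edges) :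
    ∃ (a b : V) (h : G.Adj a b) (q : G.Walk x a) (r : G.Walk b y),
      e = s(a, b) ∧ e ∉ r.edges ∧ p = q.append (cons h r) := by
  induction p with
  | nil => simp at he
  | @cons u v y h p ih =>
    by_cases hp : e ∈ p.edges
    · obtain ⟨a, b, hab, q, r, rfl, hr, rfl⟩ := ih hp
      exact ⟨a, b, hab, cons h q, r, rfl, hr, rfl⟩
    · exact ⟨u, v, h, nil, p, by simpa [hp] using he, hp, rfl⟩

theorem edist_le_edist_deleteEdges (s : Set (Sym2 V)) :
    G.edist x y ≤ (G.deleteEdges s).edist x y :=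
  edist_anti (G.deleteEdges_le s)

theorem edist_deleteEdges_le_length (p : G.Walk x y) (hp : e ∉ p.edges) :
    (G.deleteEdges {e}).edist x y ≤ p.length :=
  (edist_le (p.toDeleteEdge e hp)).trans_eq (by simp)

theorem edist_ne_top_of_edist_ne_edist_deleteEdges
    (h : G.edist x y ≠ (G.deleteEdges {e}).edist x y) : G.edist x y ≠ ⊤ := fun htop =>
  h (htop.trans (top_le_iff.mp (htop ▸ edist_le_edist_deleteEdges {e})).symm)

theorem Walk.mem_edges_of_edist_ne_edist_deleteEdges (p : G.Walk x y)
    (hp : (p.length : ℕ∞) = G.edist x y) (h : G.edist x y ≠ (G.deleteEdges {e}).edist x y) :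
    e ∈ p.edges := by
  by_contra he
  exact h ((edist_le_edist_deleteEdges {e}).antisymm (hp ▸ edist_deleteEdges_le_length p he))

theorem edist_ne_edist_deleteEdges_of_append_cons {a b : V} (q : G.Walk x a) (h : G.Adj a b)
    (r : G.Walk b w) (hp : ((q.append (.cons h r)).length : ℕ∞) = G.edist x w)
    (hr : s(a, b) ∉ r.edges) (hw : G.edist x w ≠ (G.deleteEdges {s(a, b)}).edist x w) :
    G.edist x b ≠ (G.deleteEdges {s(a, b)}).edist x b := by
  intro hb
  refine hw ((edist_le_edist_deleteEdges _).antisymm ?_)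
  calc (G.deleteEdges {s(a, b)}).edist x w
      ≤ (G.deleteEdges {s(a, b)}).edist x b + (G.deleteEdges {s(a, b)}).edist b w :=
        SimpleGraph.edist_triangle
    _ ≤ (q.concat h).length + r.length := by
        rw [← hb]
        exact add_le_add (edist_le _) (edist_deleteEdges_le_length r hr)
    _ = G.edist x w := by
        rw [← hp, Walk.length_concat, Walk.length_append, Walk.length_cons]
        push_cast
        ring

theorem Walk.eq_mk_penultimate_end_of_edist_ne_edist_deleteEdges (p : G.Walk x w)
    (hp : (p.length : ℕ∞) = G.edist x w) (hw : G.edist x w ≠ (G.deleteEdges {e}).edist x w)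
    (hmin : ∀ v, G.edist x v ≠ (G.deleteEdges {e}).edist x v → G.edist x w ≤ G.edist x v) :
    e = s(p.penultimate, w) := by
  obtain ⟨a, b, h, q, r, rfl, hr, rfl⟩ :=
    p.exists_eq_append_cons_of_mem_edges (p.mem_edges_of_edist_ne_edist_deleteEdges hp hw)
  have hb := edist_ne_edist_deleteEdges_of_append_cons q h r hp hr hw
  cases r with
  | nil => rw [← concat_eq_append, penultimate_concat]
  | cons h' r =>
    have := (hmin b hb).trans (edist_le (q.concat h))
    rw [← hp, length_concat, length_append, length_cons, length_cons] at this
    norm_cast at this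
    omega

end SimpleGraph

theorem stmt0_general {V : Type*} (G : SimpleGraph V)
    (M : Set V) (hM : IsDEMSet G M) (e e' : Sym2 V)
    (he' : e' ∈ G.edgeSet) (hne : e ≠ e') :
    pairs G M e ≠ pairs G M e' := by
  intro hpairs
  obtain ⟨x, hxM, y, hy⟩ := hM e' he'
  have hchanged : ∀ v, G.edist x v ≠ (G.deleteEdges {e}).edist x v ↔
      G.edist x v ≠ (G.deleteEdges {e'}).edist x v := fun v => by
    simpa [pairs, hxM] using Set.ext_iff.mp hpairs (x, v)
  obtain ⟨w, hw, hmin⟩ := (InvImage.wf (G.edist x) wellFounded_lt).has_min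
    {v | G.edist x v ≠ (G.deleteEdges {e'}).edist x v} ⟨y, hy⟩
  replace hmin : ∀ v, G.edist x v ≠ (G.deleteEdges {e'}).edist x v →
      G.edist x w ≤ G.edist x v := fun v hv => not_lt.mp (hmin v hv)
  obtain ⟨p, hp⟩ := exists_walk_of_edist_ne_top (edist_ne_top_of_edist_ne_edist_deleteEdges hw)
  apply hne
  rw [p.eq_mk_penultimate_end_of_edist_ne_edist_deleteEdges hp ((hchanged w).mpr hw)
      fun v hv => hmin v ((hchanged v).mp hv),
    p.eq_mk_penultimate_end_of_edist_ne_edist_deleteEdges hp hw hmin]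

theorem stmt0 {V : Type*} [Fintype V] (G : SimpleGraph V) (hG : G.Connected)
    (M : Set V) (hM : IsDEMSet G M) (e e' : Sym2 V)
    (he : e ∈ G.edgeSet) (he' : e' ∈ G.edgeSet) (hne : e ≠ e') :
    pairs G M e ≠ pairs G M e' :=
  stmt0_general G M hM e e' he' hne
end

section
/- Let G be a connected graph and e a bridge of G. Then for any vertex x of G, there exists a vertex y such that every shortest path between x and y uses e (i.e., e is monitored by x). -/
open SimpleGraph

theorem stmt1 {V : Type*} [Fintype V] (G : SimpleGraph V) (hG : G.Connected)
    (e : Sym2 V) (he : G.IsBridge e) (x : V) :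
    monitors G x e := by
  induction e using Sym2.ind with
  | _ u v =>
  have hreach := isBridge_iff.mp he
  by_cases hxu : (G.deleteEdges {s(u, v)}).Reachable x u
  · refine ⟨v, fun h => hreach ?_⟩
    have hfin : G.edist x v ≠ ⊤ := edist_ne_top_iff_reachable.mpr (hG x v)
    rw [h] at hfin
    exact hxu.symm.trans (reachable_of_edist_ne_top hfin)
  · refine ⟨u, fun h => hxu ?_⟩
    have hfin : G.edist x u ≠ ⊤ := edist_ne_top_iff_reachable.mpr (hG x u)
    rw [h] at hfin
    exact reachable_of_edist_ne_top hfin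
end

section
/- Let x be a vertex of a connected graph G. An edge uv belongs to M(x) if and only if, denoting i = d_G(x,u), we have d_G(x,v) = i-1 and v is the only neighbour of u at distance i-1 from x. -/
open SimpleGraph

-- predecessor lemma
lemma pred_exists {G : SimpleGraph V} (hG : G.Connected) {x y : V} {n : ℕ}
    (h : G.dist x y = n + 1) : ∃ w, G.Adj w y ∧ G.dist x w = n := by
  obtain ⟨p, hp⟩ := hG.exists_walk_length_eq_dist x y
  have hnn : ¬ p.reverse.Nil := by
    rw [SimpleGraph.Walk.not_nil_iff_lt_length, SimpleGraph.Walk.length_reverse, hp, h]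
    omega
  obtain ⟨w, hadj, q, hq⟩ := SimpleGraph.Walk.not_nil_iff.mp hnn
  refine ⟨w, hadj.symm, ?_⟩
  have hql : q.length = n := by
    have := congrArg SimpleGraph.Walk.length hq
    simp [SimpleGraph.Walk.length_reverse, hp, h] at this
    omega
  have h1 : G.dist x w ≤ n := by
    have := SimpleGraph.dist_le q.reverse
    simpa [hql] using this
  have h2 : G.dist x y ≤ G.dist x w + 1 := by
    calc G.dist x y ≤ G.dist x w + G.dist w y := hG.dist_triangle
    _ ≤ G.dist x w + 1 := by
        have : G.dist w y ≤ 1 := by simpa using SimpleGraph.dist_le hadj.symm.toWalk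
        omega
  omega

-- if neither condition holds, distances don't change
lemma no_change {G : SimpleGraph V} (hG : G.Connected) {x u v : V} (huv : G.Adj u v)
    (h1 : ¬(G.dist x v + 1 = G.dist x u ∧
          ∀ w, G.Adj u w → G.dist x w + 1 = G.dist x u → w = v))
    (h2 : ¬(G.dist x u + 1 = G.dist x v ∧
          ∀ w, G.Adj v w → G.dist x w + 1 = G.dist x v → w = u)) :
    ∀ n y, G.dist x y = n → ∃ p : (G.deleteEdges {s(u,v)}).Walk x y, p.length = n := by
  intro n
  induction n with
  | zero =>
    intro y hy
    have : x = y := ((hG.dist_eq_zero_iff (v := y))).mp hy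
    subst this
    exact ⟨SimpleGraph.Walk.nil, rfl⟩
  | succ n ih =>
    intro y hy
    obtain ⟨w, hw, hdw⟩ := pred_exists hG hy
    -- find a predecessor w' with edge ≠ s(u,v)
    have hne : u ≠ v := huv.ne
    obtain ⟨w', hw', hdw', hsym⟩ :
        ∃ w', G.Adj w' y ∧ G.dist x w' = n ∧ s(w', y) ≠ s(u, v) := by
      by_cases hs : s(w, y) = s(u, v)
      · rw [Sym2.eq_iff] at hs
        rcases hs with ⟨rfl, rfl⟩ | ⟨rfl, rfl⟩
        · -- w = u, y = v : condition 2's premise holds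
          push_neg at h2
          obtain ⟨w₀, hadj, hd0, hne0⟩ := h2 (by omega)
          refine ⟨w₀, hadj.symm, by omega, ?_⟩
          intro hcc
          rw [Sym2.eq_iff] at hcc
          rcases hcc with ⟨h, -⟩ | ⟨-, h⟩
          · exact hne0 h
          · exact hne h.symm
        · -- w = v, y = u : condition 1's premise holds
          push_neg at h1
          obtain ⟨w₀, hadj, hd0, hne0⟩ := h1 (by omega)
          refine ⟨w₀, hadj.symm, by omega, ?_⟩
          intro hcc
          rw [Sym2.eq_iff] at hcc
          rcases hcc with ⟨-, h⟩ | ⟨h, -⟩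
          · exact hne h
          · exact hne0 h
      · exact ⟨w, hw, hdw, hs⟩
    obtain ⟨p, hp⟩ := ih w' hdw'
    have hadj' : (G.deleteEdges {s(u,v)}).Adj w' y :=
      SimpleGraph.deleteEdges_adj.mpr ⟨hw', by simpa using hsym⟩
    exact ⟨p.concat hadj', by simp [SimpleGraph.Walk.length_concat, hp]⟩

-- easy direction: condition 1 implies distance from x to u changes
lemma does_change {G : SimpleGraph V} (hG : G.Connected) {x u v : V} (huv : G.Adj u v)
    (hdv : G.dist x v + 1 = G.dist x u)
    (huniq : ∀ w, G.Adj u w → G.dist x w + 1 = G.dist x u → w = v) :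
    G.edist x u ≠ (G.deleteEdges {s(u,v)}).edist x u := by
  intro heq
  have hr : G.Reachable x u := hG x u
  have hcast : G.edist x u = (G.dist x u : ℕ∞) := by
    rw [SimpleGraph.dist]
    exact (ENat.coe_toNat (SimpleGraph.edist_ne_top_iff_reachable.mpr hr)).symm
  have hpos : 0 < G.dist x u := by omega
  obtain ⟨p, hp⟩ := SimpleGraph.exists_walk_of_edist_eq_coe (heq ▸ hcast)
  have hnn : ¬ p.reverse.Nil := by
    rw [SimpleGraph.Walk.not_nil_iff_lt_length, SimpleGraph.Walk.length_reverse, hp]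
    omega
  obtain ⟨w, hadj, q, hq⟩ := SimpleGraph.Walk.not_nil_iff.mp hnn
  have hql : q.length = G.dist x u - 1 := by
    have := congrArg SimpleGraph.Walk.length hq
    simp [SimpleGraph.Walk.length_reverse, hp] at this
    omega
  have hGadj : G.Adj u w := (SimpleGraph.deleteEdges_adj.mp hadj).1
  have hnotv : w ≠ v := by
    intro h; subst h
    exact (SimpleGraph.deleteEdges_adj.mp hadj).2 (by simp)
  have hle : G.dist x w ≤ G.dist x u - 1 := by
    have := SimpleGraph.dist_le ((q.mapLe (SimpleGraph.deleteEdges_le _)).reverse)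
    simpa [hql] using this
  have hge : G.dist x u ≤ G.dist x w + 1 := by
    calc G.dist x u ≤ G.dist x w + G.dist w u := hG.dist_triangle
    _ ≤ G.dist x w + 1 := by
        have : G.dist w u ≤ 1 := by simpa using SimpleGraph.dist_le hGadj.symm.toWalk
        omega
  exact hnotv (huniq w hGadj (by omega))

theorem stmt2 {V : Type*} [Fintype V] (G : SimpleGraph V) (hG : G.Connected)
    (x u v : V) (huv : G.Adj u v) :
    monitors G x s(u, v) ↔
      ((G.dist x v + 1 = G.dist x u ∧
          ∀ w, G.Adj u w → G.dist x w + 1 = G.dist x u → w = v) ∨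
       (G.dist x u + 1 = G.dist x v ∧
          ∀ w, G.Adj v w → G.dist x w + 1 = G.dist x v → w = u)) := by
  constructor
  · intro hmon
    by_contra hcond
    rw [not_or] at hcond
    obtain ⟨h1, h2⟩ := hcond
    obtain ⟨y, hy⟩ := hmon
    apply hy
    obtain ⟨p, hp⟩ := no_change hG huv h1 h2 (G.dist x y) y rfl
    have hcast : G.edist x y = (G.dist x y : ℕ∞) :=
      (ENat.coe_toNat (SimpleGraph.edist_ne_top_iff_reachable.mpr (hG x y))).symm
    have hle : (G.deleteEdges {s(u,v)}).edist x y ≤ G.edist x y := by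
      calc (G.deleteEdges {s(u,v)}).edist x y ≤ (p.length : ℕ∞) := SimpleGraph.edist_le p
      _ = (G.dist x y : ℕ∞) := by rw [hp]
      _ = G.edist x y := hcast.symm
    exact le_antisymm (SimpleGraph.edist_anti (SimpleGraph.deleteEdges_le _)) hle
  · rintro (⟨hd, hu⟩ | ⟨hd, hu⟩)
    · exact ⟨u, does_change hG huv hd hu⟩
    · refine ⟨v, ?_⟩
      have := does_change hG huv.symm hd hu
      rwa [show s(v,u) = s(u,v) from Sym2.eq_swap] at this
end

section
/- For any vertex x of a connected graph G, the set of edges M(x) induces a forest (contains no cycle). -/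
/-!
Orient every monitored edge towards `x`. An edge `uv` with `d(x,u) = d(x,v)` lies on no
shortest path from `x`, and if `d(x,u) < d(x,v)` but `v` has another neighbour closer to `x`,
then shortest paths to `v` (and hence to every vertex) can avoid `uv`. So each monitored edge
`uv` has `d(x,u) < d(x,v)` with `u` the unique neighbour of `v` closer to `x`. On a cycle of
monitored edges, a vertex farthest from `x` would have two such neighbours.
-/

open SimpleGraph

namespace SimpleGraph

variable {V : Type*} {G H : SimpleGraph V} {x : V}

lemma Reachable.exists_adj_edist_lt {y : V} (hr : G.Reachable x y) (hne : y ≠ x) :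
    ∃ c, G.Adj c y ∧ G.edist x c < G.edist x y := by
  obtain ⟨p, hp⟩ := hr.exists_walk_length_eq_edist
  have hnil : ¬p.Nil := fun h => hne h.eq.symm
  refine ⟨p.penultimate, p.adj_penultimate hnil, ?_⟩
  calc G.edist x p.penultimate ≤ p.dropLast.length := edist_le _
    _ < p.length := by
      have := p.length_dropLast_add_one hnil
      exact_mod_cast (by omega : p.dropLast.length < p.length)
    _ = G.edist x y := hp

lemma edist_le_of_exists_adj_edist_lt
    (h : ∀ y, G.Reachable x y → y ≠ x → ∃ c, H.Adj c y ∧ G.edist x c < G.edist x y) (y : V) :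
    H.edist x y ≤ G.edist x y := by
  by_cases hr : G.Reachable x y
  swap
  · simp [edist_eq_top_of_not_reachable hr]
  obtain ⟨n, hn⟩ : ∃ n : ℕ, G.edist x y = n := ⟨_, hr.coe_dist_eq_edist.symm⟩
  induction n using Nat.strong_induction_on generalizing y with
  | _ n ih =>
  rcases eq_or_ne y x with rfl | hne
  · simp
  obtain ⟨c, hcy, hc⟩ := h y hr hne
  have hrc : G.Reachable x c := reachable_of_edist_ne_top (hc.trans_le le_top).ne
  have hcn : G.dist x c < n := by
    rw [← hrc.coe_dist_eq_edist, hn] at hc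
    exact_mod_cast hc
  calc H.edist x y ≤ H.edist x c + H.edist c y := H.edist_triangle
    _ ≤ G.edist x c + 1 :=
      add_le_add (ih _ hcn c hrc hrc.coe_dist_eq_edist.symm) (edist_eq_one_iff_adj.mpr hcy).le
    _ ≤ G.edist x y := Order.add_one_le_of_lt hc

lemma not_monitors_of_exists_adj_edist_lt {e : Sym2 V}
    (h : ∀ a b, e = s(a, b) → G.edist x a < G.edist x b →
      ∃ c, G.Adj c b ∧ c ≠ a ∧ G.edist x c < G.edist x b) :
    ¬ monitors G x e := by
  rintro ⟨y, hy⟩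
  refine hy (le_antisymm (edist_anti (deleteEdges_le _)) (edist_le_of_exists_adj_edist_lt ?_ y))
  intro b hb hne
  obtain ⟨a, hab, ha⟩ := hb.exists_adj_edist_lt hne
  by_cases he : e = s(a, b)
  · obtain ⟨c, hcb, hca, hc⟩ := h a b he ha
    exact ⟨c, deleteEdges_adj.mpr ⟨hcb, fun h => hca (Sym2.congr_left.mp (h.trans he))⟩, hc⟩
  · exact ⟨a, deleteEdges_adj.mpr ⟨hab, Ne.symm he⟩, ha⟩

lemma edist_ne_of_monitors {u v : V} (hm : monitors G x s(u, v)) :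
    G.edist x u ≠ G.edist x v := by
  intro huv
  refine not_monitors_of_exists_adj_edist_lt (fun a b hab hlt => ?_) hm
  rcases Sym2.eq_iff.mp hab with ⟨rfl, rfl⟩ | ⟨rfl, rfl⟩
  · exact absurd huv hlt.ne
  · exact absurd huv.symm hlt.ne

lemma eq_of_monitors_of_edist_lt {u v c : V} (hm : monitors G x s(u, v))
    (huv : G.edist x u < G.edist x v) (hcv : G.Adj c v) (hc : G.edist x c < G.edist x v) :
    c = u := by
  by_contra hcu
  refine not_monitors_of_exists_adj_edist_lt (fun a b hab hlt => ?_) hm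
  rcases Sym2.eq_iff.mp hab with ⟨rfl, rfl⟩ | ⟨rfl, rfl⟩
  · exact ⟨c, hcv, hcu, hc⟩
  · exact absurd huv hlt.asymm

lemma eq_of_adj_fromEdgeSet_monitors {w a b : V}
    (ha : (fromEdgeSet {e | e ∈ G.edgeSet ∧ monitors G x e}).Adj w a)
    (hb : (fromEdgeSet {e | e ∈ G.edgeSet ∧ monitors G x e}).Adj w b)
    (haw : G.edist x a ≤ G.edist x w) (hbw : G.edist x b ≤ G.edist x w) : a = b := by
  obtain ⟨⟨-, hma⟩, -⟩ := (fromEdgeSet_adj _).mp ha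
  obtain ⟨⟨hGb, hmb⟩, -⟩ := (fromEdgeSet_adj _).mp hb
  rw [Sym2.eq_swap] at hma hmb
  have hltb : G.edist x b < G.edist x w := hbw.lt_of_ne (edist_ne_of_monitors hmb)
  exact eq_of_monitors_of_edist_lt hma (haw.lt_of_ne (edist_ne_of_monitors hma))
    (G.adj_symm hGb) hltb |>.symm

end SimpleGraph

theorem stmt3_general {V : Type*} (G : SimpleGraph V) (x : V) :
    (SimpleGraph.fromEdgeSet {e | e ∈ G.edgeSet ∧ monitors G x e}).IsAcyclic := by
  classical
  intro v c hc
  obtain ⟨w, hw, hmax⟩ := c.support.toFinset.exists_max_image (G.edist x)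
    ⟨v, List.mem_toFinset.mpr c.start_mem_support⟩
  rw [List.mem_toFinset] at hw
  set c' := c.rotate w hw
  have hc' : c'.IsCycle := hc.rotate hw
  have hfar : ∀ z ∈ c'.support, G.edist x z ≤ G.edist x w := fun z hz =>
    hmax z (List.mem_toFinset.mpr ((c.mem_support_rotate_iff w hw).mp hz))
  exact hc'.snd_ne_penultimate <| eq_of_adj_fromEdgeSet_monitors
    (c'.adj_snd hc'.not_nil) (c'.adj_penultimate hc'.not_nil).symm
    (hfar _ (c'.getVert_mem_support _)) (hfar _ (c'.getVert_mem_support _))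

theorem stmt3 {V : Type*} [Fintype V] (G : SimpleGraph V) (hG : G.Connected) (x : V) :
    (SimpleGraph.fromEdgeSet {e | e ∈ G.edgeSet ∧ monitors G x e}).IsAcyclic :=
  stmt3_general G x
end

section
/- Let G be a connected graph and x a vertex of G. Then M(x) equals exactly the set of edges incident with x if and only if for every vertex y ≠ x there exist two shortest paths from x to y sharing at most one edge, namely the edge incident with x. -/
open SimpleGraph

section Aux
open SimpleGraph Walk
variable {V : Type*}
private lemma edist_eq_dist' {G : SimpleGraph V} {u v : V} (h : G.Reachable u v) :
    G.edist u v = (G.dist u v : ℕ∞) :=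
  (ENat.coe_toNat (edist_ne_top_iff_reachable.mpr h)).symm

/-- deleting `e` leaves the distance from `x` to `y` unchanged iff some shortest path avoids `e`. -/
private lemma avoid_iff {G : SimpleGraph V} (hG : G.Connected) (e : Sym2 V) (x y : V) :
    G.edist x y = (G.deleteEdges {e}).edist x y ↔
      ∃ p : G.Walk x y, p.IsPath ∧ p.length = G.dist x y ∧ e ∉ p.edges := by
  constructor
  · intro h
    have h2 : (G.deleteEdges {e}).edist x y = (G.dist x y : ℕ∞) := by
      rw [← h]; exact edist_eq_dist' (hG x y)
    obtain ⟨w, hw⟩ := exists_walk_of_edist_eq_coe h2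
    have hsub : ∀ e' ∈ w.edges, e' ∈ G.edgeSet := fun e' he' =>
      ((G.edgeSet_deleteEdges {e}) ▸ w.edges_subset_edgeSet he').1
    refine ⟨w.transfer G hsub, ?_, ?_, ?_⟩
    · exact (w.transfer G hsub).isPath_of_length_eq_dist (by rwa [length_transfer])
    · rwa [length_transfer]
    · rw [edges_transfer]
      intro he
      exact ((G.edgeSet_deleteEdges {e}) ▸ w.edges_subset_edgeSet he).2 rfl
  · rintro ⟨p, -, hl, he⟩
    have hne : ∀ e' ∈ p.edges, e' ∉ ({e} : Set (Sym2 V)) := by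
      intro e' he' h'; exact he (Set.mem_singleton_iff.mp h' ▸ he')
    refine le_antisymm (edist_anti (G.deleteEdges_le {e})) ?_
    calc (G.deleteEdges {e}).edist x y ≤ (p.toDeleteEdges {e} hne).length := edist_le _
      _ = (G.dist x y : ℕ∞) := by rw [length_transfer, hl]
      _ = G.edist x y := (edist_eq_dist' (hG x y)).symm

private lemma monitors_of_inc {G : SimpleGraph V} {x b : V} (h : G.Adj x b) :
    monitors G x s(x, b) := by
  refine ⟨b, fun heq => ?_⟩
  have h1 : G.edist x b = 1 := edist_eq_one_iff_adj.mpr h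
  rw [h1] at heq
  have : (G.deleteEdges {s(x, b)}).Adj x b := edist_eq_one_iff_adj.mp heq.symm
  rw [deleteEdges_adj] at this
  exact this.2 rfl

/-- splitting a shortest walk at a support vertex -/
private lemma dist_split [DecidableEq V] {G : SimpleGraph V} (hG : G.Connected) {x y v : V} {p : G.Walk x y}
    (hp : p.length = G.dist x y) (hv : v ∈ p.support) :
    (p.takeUntil v hv).length = G.dist x v ∧ (p.dropUntil v hv).length = G.dist v y ∧
      G.dist x v + G.dist v y = G.dist x y := by
  have h1 := dist_le (p.takeUntil v hv)
  have h2 := dist_le (p.dropUntil v hv)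
  have hlen : (p.takeUntil v hv).length + (p.dropUntil v hv).length = p.length := by
    rw [← length_append, take_spec]
  have tri := hG.dist_triangle (u := x) (v := v) (w := y)
  omega


/-- the BFS level (from `x`) of an edge: min distance of its endpoints to `x`. -/
noncomputable def lvl (G : SimpleGraph V) (x : V) : Sym2 V → ℕ :=
  Sym2.lift ⟨fun a b => min (G.dist x a) (G.dist x b), fun a b => by simp [min_comm]⟩

@[simp] lemma lvl_mk (G : SimpleGraph V) (x a b : V) :
    lvl G x s(a, b) = min (G.dist x a) (G.dist x b) := rfl

/-- structure of walks lying along shortest paths from `x`. -/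
private lemma geodesic_edges {G : SimpleGraph V} (hG : G.Connected) (x : V) :
    ∀ {u y : V} (w : G.Walk u y), G.dist x u + w.length ≤ G.dist x y →
      (∀ e ∈ w.edges, ∃ a b, e = s(a, b) ∧ G.dist x a = lvl G x e ∧
          G.dist x b = lvl G x e + 1 ∧ b ∈ w.support) ∧
        w.edges.map (lvl G x) = List.range' (G.dist x u) w.length := by
  intro u y w
  induction w with
  | nil => intro _; exact ⟨by simp, by simp⟩
  | @cons u c y h w ih =>
    intro hle
    have hdc : G.dist x c = G.dist x u + 1 := by
      have h1 : G.dist x c ≤ G.dist x u + 1 := by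
        have := hG.dist_triangle (u := x) (v := u) (w := c)
        have h2 : G.dist u c ≤ 1 := by simpa using dist_le h.toWalk
        omega
      have h3 : G.dist x y ≤ G.dist x c + G.dist c y := hG.dist_triangle
      have h4 : G.dist c y ≤ w.length := dist_le w
      simp only [Walk.length_cons] at hle
      omega
    have hlvl : lvl G x s(u, c) = G.dist x u := by
      rw [lvl_mk, hdc]; omega
    obtain ⟨ih1, ih2⟩ := ih (by simp only [Walk.length_cons] at hle; omega)
    constructor
    · intro e he
      rw [Walk.edges_cons, List.mem_cons] at he
      rcases he with rfl | he
      · exact ⟨u, c, rfl, hlvl.symm, by rw [hlvl, hdc], by simp⟩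
      · obtain ⟨a, b, rfl, h1, h2, h3⟩ := ih1 e he
        exact ⟨a, b, rfl, h1, h2, by simp [h3]⟩
    · rw [Walk.edges_cons, List.map_cons, ih2, Walk.length_cons, List.range'_succ, hlvl, hdc]

/-- for a shortest walk from `x`, the list of levels of edges is `range length`. -/
private lemma lvl_map_eq_range {G : SimpleGraph V} (hG : G.Connected) {x y : V}
    (p : G.Walk x y) (hp : p.length = G.dist x y) :
    p.edges.map (lvl G x) = List.range p.length := by
  have := (geodesic_edges hG x p (by simp [hp])).2
  rw [List.range_eq_range']
  rwa [SimpleGraph.dist_self] at this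

private lemma lvl_injOn {G : SimpleGraph V} (hG : G.Connected) {x y : V}
    (p : G.Walk x y) (hp : p.length = G.dist x y) :
    ∀ e ∈ p.edges, ∀ e' ∈ p.edges, lvl G x e = lvl G x e' → e = e' := by
  have hnd : (p.edges.map (lvl G x)).Nodup := by
    rw [lvl_map_eq_range hG p hp]; exact List.nodup_range
  exact List.inj_on_of_nodup_map hnd

private lemma lvl_lt_of_mem {G : SimpleGraph V} (hG : G.Connected) {x y : V}
    (p : G.Walk x y) (hp : p.length = G.dist x y) {e : Sym2 V} (he : e ∈ p.edges) :
    lvl G x e < p.length := by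
  have := lvl_map_eq_range hG p hp
  have hm : lvl G x e ∈ p.edges.map (lvl G x) := List.mem_map_of_mem he
  rw [this, List.mem_range] at hm; exact hm

private lemma geom_sum_four_lt (n : ℕ) : ∑ i ∈ Finset.range n, 4 ^ i < 4 ^ n := by
  induction n with
  | zero => simp
  | succ n ih =>
    rw [Finset.sum_range_succ, pow_succ]
    omega

private lemma sum_pow_lt {T : Finset (Sym2 V)} {f : Sym2 V → ℕ} {n : ℕ}
    (hinj : ∀ e ∈ T, ∀ e' ∈ T, f e = f e' → e = e') (hlt : ∀ e ∈ T, f e < n) :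
    ∑ e ∈ T, 4 ^ f e < 4 ^ n := by
  classical
  calc ∑ e ∈ T, 4 ^ f e = ∑ i ∈ T.image f, 4 ^ i := (Finset.sum_image hinj).symm
    _ ≤ ∑ i ∈ Finset.range n, 4 ^ i := Finset.sum_le_sum_of_subset (by
        intro i hi
        rw [Finset.mem_image] at hi
        obtain ⟨e, he, rfl⟩ := hi
        exact Finset.mem_range.mpr (hlt e he))
    _ < 4 ^ n := geom_sum_four_lt n


private lemma exists_two_paths {G : SimpleGraph V} (hG : G.Connected) (x : V)
    (hav : ∀ e ∈ G.edgeSet, x ∉ e → ∀ b : V,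
      ∃ R : G.Walk x b, R.IsPath ∧ R.length = G.dist x b ∧ e ∉ R.edges)
    (y : V) :
    ∃ p q : G.Walk x y, p.IsPath ∧ q.IsPath ∧ p.length = G.dist x y ∧ q.length = G.dist x y ∧
      ∀ e, e ∈ p.edges → e ∈ q.edges → x ∈ e := by
  classical
  obtain ⟨p, hpp, hpl⟩ := hG.exists_path_of_dist x y
  set Φ : G.Walk x y → ℕ := fun q =>
    ∑ e ∈ p.edges.toFinset.filter (fun e => e ∈ q.edges ∧ x ∉ e), 4 ^ lvl G x e with hΦ
  suffices H : ∀ n (q : G.Walk x y), q.IsPath → q.length = G.dist x y → Φ q ≤ n →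
      ∃ q' : G.Walk x y, q'.IsPath ∧ q'.length = G.dist x y ∧
        ∀ e, e ∈ p.edges → e ∈ q'.edges → x ∈ e by
    obtain ⟨q', h1, h2, h3⟩ := H (Φ p) p hpp hpl le_rfl
    exact ⟨p, q', hpp, h1, hpl, h2, h3⟩
  intro n
  induction n using Nat.strong_induction_on with
  | _ n ih =>
  intro q hqp hql hΦn
  by_cases hTe : p.edges.toFinset.filter (fun e => e ∈ q.edges ∧ x ∉ e) = ∅
  · refine ⟨q, hqp, hql, fun e hep heq => ?_⟩
    by_contra hx
    have : e ∈ p.edges.toFinset.filter (fun e => e ∈ q.edges ∧ x ∉ e) := by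
      simp [hep, heq, hx]
    simp [hTe] at this
  · obtain ⟨e, heT, hemax⟩ := Finset.exists_max_image _ (lvl G x)
      (Finset.nonempty_of_ne_empty hTe)
    have heT' := heT
    rw [Finset.mem_filter, List.mem_toFinset] at heT'
    obtain ⟨hep, heq, hex⟩ := heT'
    obtain ⟨a, b, rfl, hda, hdb, -⟩ := (geodesic_edges hG x p (by simp [hpl])).1 e hep
    set k := lvl G x s(a, b) with hk
    -- split q at b
    have hbq : b ∈ q.support := q.snd_mem_support_of_mem_edges heq
    obtain ⟨hq1l, hq2l, hsum⟩ := dist_split hG hql hbq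
    set q2 := q.dropUntil b hbq with hq2
    -- a replacement shortest path to b avoiding e
    obtain ⟨R, hRp, hRl, hRe⟩ := hav s(a, b) (p.edges_subset_edgeSet hep) hex b
    set w := R.append q2 with hw
    have hwl : w.length = G.dist x y := by
      rw [hw, length_append, hRl, hq2l]; omega
    set q' := w.bypass with hq'
    have hq'p : q'.IsPath := w.bypass_isPath
    have hq'l : q'.length = G.dist x y := by
      have h1 := dist_le q'
      have h2 : q'.length ≤ w.length := w.length_bypass_le
      omega
    -- every common edge of p and q' lies on R
    have hsub : p.edges.toFinset.filter (fun e => e ∈ q'.edges ∧ x ∉ e) ⊆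
        p.edges.toFinset.filter (fun e => e ∈ R.edges ∧ x ∉ e) := by
      intro e' he'
      rw [Finset.mem_filter, List.mem_toFinset] at he' ⊢
      obtain ⟨he'p, he'q', he'x⟩ := he'
      refine ⟨he'p, ?_, he'x⟩
      have : e' ∈ w.edges := w.edges_bypass_subset he'q'
      rw [hw, edges_append, List.mem_append] at this
      rcases this with h | h
      · exact h
      · exfalso
        -- a common edge in q2 would have level > k, contradicting maximality of e
        have hq2geo := (geodesic_edges hG x q2 (by rw [hq2l]; omega)).2
        have hmem : lvl G x e' ∈ (q2.edges.map (lvl G x)) := List.mem_map_of_mem h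
        rw [hq2geo, List.mem_range'] at hmem
        obtain ⟨i, -, hi⟩ := hmem
        have hge : k + 1 ≤ lvl G x e' := by rw [hi, hdb]; omega
        have : e' ∈ p.edges.toFinset.filter (fun e => e ∈ q.edges ∧ x ∉ e) := by
          rw [Finset.mem_filter, List.mem_toFinset]
          exact ⟨he'p, q.edges_dropUntil_subset hbq h, he'x⟩
        have := hemax e' this
        omega
    -- the sum over common edges on R is < 4 ^ k
    have hRbound : ∀ e' ∈ p.edges.toFinset.filter (fun e => e ∈ R.edges ∧ x ∉ e),
        lvl G x e' < k := by
      intro e' he'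
      rw [Finset.mem_filter, List.mem_toFinset] at he'
      obtain ⟨he'p, he'R, -⟩ := he'
      have hle : lvl G x e' < R.length := lvl_lt_of_mem hG R hRl he'R
      rw [hRl] at hle
      rcases Nat.lt_or_ge (lvl G x e') k with h | h
      · exact h
      exfalso
      have hEq : lvl G x e' = k := by omega
      obtain ⟨c, d, rfl, hdc, hdd, hdR⟩ := (geodesic_edges hG x R (by simp [hRl])).1 e' he'R
      have hdb2 : d = b := by
        obtain ⟨ht1, -, hs⟩ := dist_split hG hRl hdR
        have : G.dist d b = 0 := by rw [hEq] at hdd; omega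
        exact (hG.dist_eq_zero_iff).mp this
      subst hdb2
      have heq2 := lvl_injOn hG p hpl _ he'p _ hep (by rw [hEq, hk])
      rw [heq2] at he'R
      exact hRe he'R
    have hlt : Φ q' < Φ q := by
      have h1 : Φ q' ≤ ∑ e' ∈ p.edges.toFinset.filter (fun e => e ∈ R.edges ∧ x ∉ e),
          4 ^ lvl G x e' := Finset.sum_le_sum_of_subset hsub
      have h2 : ∑ e' ∈ p.edges.toFinset.filter (fun e => e ∈ R.edges ∧ x ∉ e),
          4 ^ lvl G x e' < 4 ^ k := by
        apply sum_pow_lt ?_ hRbound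
        intro e1 h1 e2 h2 hEq
        rw [Finset.mem_filter, List.mem_toFinset] at h1 h2
        exact lvl_injOn hG p hpl _ h1.1 _ h2.1 hEq
      have h3 : 4 ^ k ≤ Φ q :=
        Finset.single_le_sum (f := fun e => 4 ^ lvl G x e) (fun _ _ => Nat.zero_le _) heT
      omega
    exact ih (Φ q') (by omega) q' hq'p hq'l le_rfl

end Aux

theorem stmt5 {V : Type*} [Fintype V] (G : SimpleGraph V) (hG : G.Connected) (x : V) :
    (∀ e ∈ G.edgeSet, (monitors G x e ↔ x ∈ e)) ↔
      (∀ y : V, y ≠ x → ∃ p q : G.Walk x y, p.IsPath ∧ q.IsPath ∧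
        p.length = G.dist x y ∧ q.length = G.dist x y ∧
        ∀ e, e ∈ p.edges → e ∈ q.edges → x ∈ e) := by
  classical
  constructor
  · intro hL y hy
    apply exists_two_paths hG x ?_ y
    intro e he hx b
    have hnm : ¬ monitors G x e := fun h => hx ((hL e he).mp h)
    rw [monitors] at hnm
    push_neg at hnm
    exact (avoid_iff hG e x b).mp (hnm b)
  · intro hR e he
    constructor
    · intro hm
      by_contra hx
      obtain ⟨y, hy⟩ := hm
      apply hy
      rcases eq_or_ne y x with rfl | hyx
      · rw [SimpleGraph.edist_self, SimpleGraph.edist_self]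
      obtain ⟨p, q, hpp, hqp, hpl, hql, hcom⟩ := hR y hyx
      rcases Classical.em (e ∈ p.edges) with h | h
      · rcases Classical.em (e ∈ q.edges) with h' | h'
        · exact absurd (hcom e h h') hx
        · exact (avoid_iff hG e x y).mpr ⟨q, hqp, hql, h'⟩
      · exact (avoid_iff hG e x y).mpr ⟨p, hpp, hpl, h⟩
    · intro hx
      obtain ⟨b, rfl⟩ := Sym2.mem_iff_exists.mp hx
      exact monitors_of_inc (G.mem_edgeSet.mp he)
end

section
/- Let G be a connected graph with at least one edge. Then dem(G) = 1 if and only if G is a tree. -/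
open SimpleGraph

lemma parent_exists {V : Type*} {G : SimpleGraph V} (hG : G.Connected) (x v : V)
    (hv : v ≠ x) : ∃ w, G.Adj w v ∧ G.dist x w + 1 = G.dist x v := by
  obtain ⟨p, hp⟩ := hG.exists_walk_length_eq_dist x v
  cases p with
  | nil => exact absurd rfl hv.symm
  | cons h q =>
    obtain ⟨z, r, h', hcat⟩ := Walk.exists_cons_eq_concat h q
    have hlen : r.length + 1 = G.dist x v := by
      rw [← hp, hcat, Walk.length_concat]
    have h1 : G.dist x z ≤ r.length := dist_le r
    have h2 : G.dist x v ≤ G.dist x z + 1 := by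
      have := dist_eq_one_iff_adj.mpr h'
      calc G.dist x v ≤ G.dist x z + G.dist z v := hG.dist_triangle
        _ = G.dist x z + 1 := by rw [this]
    exact ⟨z, h', by omega⟩

lemma no_monitor {V : Type*} {G : SimpleGraph V} (hG : G.Connected) (x : V) (e : Sym2 V)
    (hpar : ∀ y, y ≠ x → ∃ w, G.Adj w y ∧ s(w, y) ≠ e ∧ G.dist x w + 1 = G.dist x y) :
    ¬ monitors G x e := by
  rintro ⟨y, hy⟩
  apply hy
  have claim : ∀ n, ∀ z, G.dist x z = n → (G.deleteEdges {e}).edist x z ≤ (n : ℕ∞) := by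
    intro n
    induction n using Nat.strong_induction_on with
    | _ n ih =>
      intro z hz
      by_cases hxz : z = x
      · subst hxz
        simp [edist_self]
      · obtain ⟨w, hadj, hne, hdist⟩ := hpar z hxz
        rw [hz] at hdist
        have hw := ih (G.dist x w) (by omega) w rfl
        have hH : (G.deleteEdges {e}).Adj w z := by
          rw [deleteEdges_adj]
          exact ⟨hadj, by simpa using hne⟩
        calc (G.deleteEdges {e}).edist x z
            ≤ (G.deleteEdges {e}).edist x w + (G.deleteEdges {e}).edist w z :=
              SimpleGraph.edist_triangle
          _ ≤ (G.dist x w : ℕ∞) + 1 := by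
              apply add_le_add hw
              exact le_of_eq (edist_eq_one_iff_adj.mpr hH)
          _ = (n : ℕ∞) := by rw [← hdist]; push_cast; ring
  refine le_antisymm (edist_anti (deleteEdges_le _)) ?_
  have hnt : G.edist x y ≠ ⊤ := edist_ne_top_iff_reachable.mpr (hG x y)
  rw [← ENat.coe_toNat hnt]
  exact claim _ y rfl

section main
variable {V : Type*} {G : SimpleGraph V} {x : V}

lemma edge_struct (hG : G.Connected) (hmon : ∀ e ∈ G.edgeSet, monitors G x e)
    (e : Sym2 V) (he : e ∈ G.edgeSet) :
    ∃ v w, e = s(w, v) ∧ G.dist x w + 1 = G.dist x v ∧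
      (∀ w', G.Adj w' v → G.dist x w' + 1 = G.dist x v → w' = w) := by
  have h1 : ¬ ∀ y, y ≠ x → ∃ w, G.Adj w y ∧ s(w, y) ≠ e ∧ G.dist x w + 1 = G.dist x y := by
    intro h
    exact no_monitor hG x e h (hmon e he)
  push_neg at h1
  obtain ⟨y, hyx, hy⟩ := h1
  have hy' : ∀ w, G.Adj w y → G.dist x w + 1 = G.dist x y → s(w, y) = e := by
    intro w hadj hd
    by_contra hne
    exact (hy w hadj hne) hd
  obtain ⟨w0, hadj0, hd0⟩ := parent_exists hG x y hyx
  have he0 : s(w0, y) = e := hy' w0 hadj0 hd0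
  refine ⟨y, w0, he0.symm, hd0, ?_⟩
  intro w' hadj' hd'
  have := (hy' w' hadj' hd').trans he0.symm
  rw [Sym2.congr_left] at this
  exact this

lemma unique_parent (hG : G.Connected) (hmon : ∀ e ∈ G.edgeSet, monitors G x e)
    {v w1 w2 : V} (h1 : G.Adj w1 v) (hd1 : G.dist x w1 + 1 = G.dist x v)
    (h2 : G.Adj w2 v) (hd2 : G.dist x w2 + 1 = G.dist x v) : w1 = w2 := by
  obtain ⟨v0, w0, hrep, hd0, huniq⟩ := edge_struct hG hmon s(w1, v) h1
  rw [Sym2.eq_iff] at hrep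
  rcases hrep with ⟨rfl, rfl⟩ | ⟨rfl, rfl⟩
  · exact (huniq w1 h1 hd1).trans (huniq w2 h2 hd2).symm
  · omega

lemma edge_orient (hG : G.Connected) (hmon : ∀ e ∈ G.edgeSet, monitors G x e)
    {a b : V} (hab : G.Adj a b) :
    G.dist x a + 1 = G.dist x b ∨ G.dist x b + 1 = G.dist x a := by
  obtain ⟨v0, w0, hrep, hd0, -⟩ := edge_struct hG hmon s(a, b) hab
  rw [Sym2.eq_iff] at hrep
  rcases hrep with ⟨rfl, rfl⟩ | ⟨rfl, rfl⟩
  · exact Or.inl hd0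
  · exact Or.inr hd0

end main

section bridge
variable {V : Type*} {G : SimpleGraph V} {x : V}

lemma bridge_of_parent (hG : G.Connected) (hmon : ∀ e ∈ G.edgeSet, monitors G x e)
    {u v : V} (huv : G.Adj u v) (hd : G.dist x u + 1 = G.dist x v) :
    ¬ (G.deleteEdges {s(u, v)}).Reachable u v := by
  set C : V → V → Prop := fun a b => G.Adj a b ∧ G.dist x a + 1 = G.dist x b with hC
  set S : Set V := {w | Relation.ReflTransGen C v w} with hS
  have hvS : v ∈ S := Relation.ReflTransGen.refl
  have mono : ∀ w ∈ S, G.dist x v ≤ G.dist x w := by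
    intro w hw
    induction hw with
    | refl => exact le_refl _
    | tail h1 h2 ih => obtain ⟨-, h2'⟩ := h2; omega
  have huS : u ∉ S := by
    intro h
    have := mono u h
    omega
  have key : ∀ a b, a ∈ S → b ∉ S → G.Adj a b → s(a, b) = s(u, v) := by
    intro a b ha hb hab
    rcases edge_orient hG hmon hab with h | h
    · exact absurd (ha.tail ⟨hab, h⟩) hb
    · rcases Relation.ReflTransGen.cases_tail ha with heq | ⟨c, hc, hca⟩
      · subst heq
        have : b = u := unique_parent hG hmon hab.symm h huv hd
        subst this
        exact Sym2.eq_swap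
      · have hcb : c = b := unique_parent hG hmon hca.1 hca.2 hab.symm h
        exact absurd (hcb ▸ hc) hb
  rintro ⟨p⟩
  obtain ⟨d, hdmem, hd1, hd2⟩ := p.exists_boundary_dart Sᶜ huS (by simpa using hvS)
  have hadj := d.adj
  rw [deleteEdges_adj] at hadj
  have : s(d.snd, d.fst) = s(u, v) := key d.snd d.fst (by simpa using hd2) hd1 hadj.1.symm
  rw [Sym2.eq_swap] at this
  exact hadj.2 (by simpa using this)

lemma acyclic_of_monitor (hG : G.Connected) (hmon : ∀ e ∈ G.edgeSet, monitors G x e) :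
    G.IsAcyclic := by
  rw [isAcyclic_iff_forall_adj_isBridge]
  intro a b hab
  rcases edge_orient hG hmon hab with h | h
  · rw [isBridge_iff]
    exact bridge_of_parent hG hmon hab h
  · rw [Sym2.eq_swap, isBridge_iff]
    exact bridge_of_parent hG hmon hab.symm h

end bridge

theorem stmt6' {V : Type*} [Fintype V] (G : SimpleGraph V) (hG : G.Connected)
    (hne : G.edgeSet.Nonempty) :
    sInf {k | ∃ M : Finset V, M.card = k ∧ IsDEMSet G ↑M} = 1 ↔ G.IsTree := by
  constructor
  · intro h
    have hS : {k | ∃ M : Finset V, M.card = k ∧ IsDEMSet G ↑M}.Nonempty := by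
      by_contra hns
      rw [Set.not_nonempty_iff_eq_empty] at hns
      rw [hns, Nat.sInf_empty] at h
      exact one_ne_zero h.symm
    have h1 : 1 ∈ {k | ∃ M : Finset V, M.card = k ∧ IsDEMSet G ↑M} := h ▸ Nat.sInf_mem hS
    obtain ⟨M, hM1, hMdem⟩ := h1
    obtain ⟨x, rfl⟩ := Finset.card_eq_one.mp hM1
    have hmon : ∀ e ∈ G.edgeSet, monitors G x e := by
      intro e he
      obtain ⟨x', hx', hm⟩ := hMdem e he
      simp only [Finset.coe_singleton, Set.mem_singleton_iff] at hx'
      subst hx'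
      exact hm
    exact ⟨hG, acyclic_of_monitor hG hmon⟩
  · intro hT
    obtain ⟨x⟩ := hG.nonempty
    have hdem : IsDEMSet G ↑({x} : Finset V) := by
      intro e he
      refine ⟨x, by simp, ?_⟩
      revert he
      refine Sym2.ind (fun u v he => ?_) e
      have hadj : G.Adj u v := he
      have hnr : ¬ (G.deleteEdges {s(u, v)}).Reachable u v :=
        (isBridge_iff.mp (isAcyclic_iff_forall_adj_isBridge.mp hT.2 hadj))
      by_cases hru : (G.deleteEdges {s(u, v)}).Reachable x u
      · have hrv : ¬ (G.deleteEdges {s(u, v)}).Reachable x v :=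
          fun hrv => hnr (hru.symm.trans hrv)
        refine ⟨v, ?_⟩
        rw [edist_eq_top_of_not_reachable hrv]
        exact edist_ne_top_iff_reachable.mpr (hG x v)
      · refine ⟨u, ?_⟩
        rw [edist_eq_top_of_not_reachable hru]
        exact edist_ne_top_iff_reachable.mpr (hG x u)
    have hle : sInf {k | ∃ M : Finset V, M.card = k ∧ IsDEMSet G ↑M} ≤ 1 :=
      Nat.sInf_le ⟨{x}, Finset.card_singleton x, hdem⟩
    have hge : sInf {k | ∃ M : Finset V, M.card = k ∧ IsDEMSet G ↑M} ≠ 0 := by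
      intro h0
      rw [Nat.sInf_eq_zero] at h0
      rcases h0 with h0 | h0
      · obtain ⟨M, hM0, hMdem⟩ := h0
        obtain ⟨e, he⟩ := hne
        obtain ⟨y, hy, -⟩ := hMdem e he
        rw [Finset.card_eq_zero.mp hM0] at hy
        simp at hy
      · rw [Set.eq_empty_iff_forall_notMem] at h0
        exact h0 1 ⟨{x}, Finset.card_singleton x, hdem⟩
    omega

theorem stmt6 {V : Type*} [Fintype V] (G : SimpleGraph V) (hG : G.Connected)
    (hne : G.edgeSet.Nonempty) :
    dem V G = 1 ↔ G.IsTree := stmt6' G hG hne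
end

section
/- For integers a, b ≥ 2, the a×b grid graph G_{a,b} satisfies dem(G_{a,b}) = max{a,b}. -/
open SimpleGraph

/-!
A vertex `(a₀, b₀)` of `G □ H` can only notice the deletion of an edge inside the `H`-fibre
`{a} × H` if `a₀ = a`: otherwise, for every target, a shortest walk that first runs inside the
fibre `{a₀} × H` and then inside a `G`-fibre avoids the edge. Conversely, in a fibre copy of a path,
every edge separates `(a, b₀)` from one of its endpoints within the fibre, and any detour around it
leaves the fibre and pays at least two extra steps. Hence a set monitors all edges of the grid
`P_m □ P_n` exactly when it meets every row and every column, and the smallest such set has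
`max m n` elements.
-/

namespace SimpleGraph

variable {V W : Type*} {G : SimpleGraph V} {G' : SimpleGraph W}

lemma edist_map_le (f : G →g G') (u v : V) : G'.edist (f u) (f v) ≤ G.edist u v := by
  by_cases h : G.edist u v = ⊤
  · simp [h]
  · obtain ⟨p, hp⟩ := exists_walk_of_edist_ne_top h
    rw [← hp, ← Walk.length_map f]
    exact edist_le _

lemma Iso.edist_eq (φ : G ≃g G') (u v : V) : G'.edist (φ u) (φ v) = G.edist u v :=
  le_antisymm (edist_map_le φ.toHom u v) <| by
    simpa using edist_map_le φ.symm.toHom (φ u) (φ v)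

def Iso.deleteEdges (φ : G ≃g G') (s : Set (Sym2 V)) :
    G.deleteEdges s ≃g G'.deleteEdges (Sym2.map φ '' s) where
  toEquiv := φ.toEquiv
  map_rel_iff' {u v} := by
    rw [deleteEdges_adj, deleteEdges_adj]
    exact and_congr φ.map_adj_iff
      (not_congr ((Sym2.map.injective φ.injective).mem_set_image (a := s(u, v))))

lemma Iso.edist_deleteEdges (φ : G ≃g G') (s : Set (Sym2 V)) (u v : V) :
    (G'.deleteEdges (Sym2.map φ '' s)).edist (φ u) (φ v) = (G.deleteEdges s).edist u v :=
  (φ.deleteEdges s).edist_eq u v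

lemma Walk.edist_add_edist_le_length {u v x : V} (w : G.Walk u v) (hx : x ∈ w.support) :
    G.edist u x + G.edist x v ≤ w.length := by
  classical
  rw [← w.take_spec hx, Walk.length_append, Nat.cast_add]
  exact add_le_add (edist_le _) (edist_le _)

namespace Walk

variable {α β : Type*} {G : SimpleGraph α} {H : SimpleGraph β}

lemma length_boxProdLeft {a₁ a₂ : α} (w : G.Walk a₁ a₂) (b : β) :
    (w.boxProdLeft H b).length = w.length := length_map _ _

lemma edges_boxProdLeft {a₁ a₂ : α} (w : G.Walk a₁ a₂) (b : β) :
    (w.boxProdLeft H b).edges = w.edges.map (Sym2.map (·, b)) := edges_map _ _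

lemma length_boxProdRight {b₁ b₂ : β} (a : α) (w : H.Walk b₁ b₂) :
    (w.boxProdRight G a).length = w.length := length_map _ _

lemma edges_boxProdRight {b₁ b₂ : β} (a : α) (w : H.Walk b₁ b₂) :
    (w.boxProdRight G a).edges = w.edges.map (Sym2.map (a, ·)) := edges_map _ _

end Walk

lemma pathGraph_not_reachable_deleteEdges {n : ℕ} {u v q r : Fin n}
    (huv : u.val + 1 = v.val) (hq : q ≤ u) (hr : u < r) :
    ¬ ((pathGraph n).deleteEdges {s(u, v)}).Reachable q r := by
  rintro ⟨w⟩
  obtain ⟨⟨⟨x, y⟩, hadj⟩, -, hx, hy⟩ := w.exists_boundary_dart {x | x ≤ u} hq (not_le.2 hr)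
  obtain ⟨hadj, hne⟩ := deleteEdges_adj.1 hadj
  simp only [Set.mem_ofPred_eq, not_le, Fin.le_def, pathGraph_adj] at hx hy hadj
  obtain rfl : x = u := Fin.ext (by omega)
  obtain rfl : y = v := Fin.ext (by omega)
  exact hne rfl

end SimpleGraph

open SimpleGraph

lemma monitors_iso_iff {V W : Type*} {G : SimpleGraph V} {G' : SimpleGraph W} (φ : G ≃g G')
    (x : V) (e : Sym2 V) : monitors G' (φ x) (e.map φ) ↔ monitors G x e := by
  simp only [monitors, φ.surjective.exists, φ.edist_eq, ← Set.image_singleton,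
    φ.edist_deleteEdges]

lemma dem_eq_of_isDEMSet {V : Type*} [Fintype V] {G : SimpleGraph V} {n : ℕ} (M : Finset V)
    (hM : IsDEMSet G M) (hcard : M.card = n) (hmin : ∀ N : Finset V, IsDEMSet G N → n ≤ N.card) :
    dem V G = n :=
  le_antisymm (Nat.sInf_le ⟨M, hcard, hM⟩)
    (le_csInf ⟨n, M, hcard, hM⟩ (by rintro _ ⟨N, rfl, hN⟩; exact hmin N hN))

section BoxProd

variable {α β : Type*} {G : SimpleGraph α} {H : SimpleGraph β}

lemma not_monitors_boxProd_of_fst_ne {a₀ a : α} (h : a₀ ≠ a) (b₀ b₁ b₂ : β) :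
    ¬ monitors (G □ H) (a₀, b₀) s((a, b₁), (a, b₂)) := by
  rintro ⟨⟨a', b'⟩, hne⟩
  refine hne (le_antisymm (edist_anti (deleteEdges_le _)) ?_)
  rw [edist_boxProd]
  by_cases hfin : G.edist a₀ a' ≠ ⊤ ∧ H.edist b₀ b' ≠ ⊤
  · obtain ⟨wG, hwG⟩ := exists_walk_of_edist_ne_top hfin.1
    obtain ⟨wH, hwH⟩ := exists_walk_of_edist_ne_top hfin.2
    let w := (wH.boxProdRight G a₀).append (wG.boxProdLeft H b')
    have hw : ∀ f ∈ w.edges, f ∉ ({s((a, b₁), (a, b₂))} : Set _) := by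
      simp only [w, Walk.edges_append, Walk.edges_boxProdLeft, Walk.edges_boxProdRight,
        List.mem_append, List.mem_map, Set.mem_singleton_iff]
      rintro _ (⟨f, -, rfl⟩ | ⟨f, hf, rfl⟩) heq
      · obtain ⟨y, -, hy⟩ := Sym2.mem_map.1 (heq ▸ Sym2.mem_mk_left (a, b₁) (a, b₂))
        exact h (congrArg Prod.fst hy)
      · induction f using Sym2.ind with | _ c c' =>
        have hadj := wG.adj_of_mem_edges hf
        simp only [Sym2.map_mk, Sym2.eq, Sym2.rel_iff', Prod.mk.injEq, Prod.swap_prod_mk] at heq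
        exact hadj.ne (heq.elim (fun h => h.1.1.trans h.2.1.symm) (fun h => h.1.1.trans h.2.1.symm))
    calc ((G □ H).deleteEdges {s((a, b₁), (a, b₂))}).edist (a₀, b₀) (a', b')
        ≤ (w.toDeleteEdges _ hw).length := edist_le _
      _ = G.edist a₀ a' + H.edist b₀ b' := by
        rw [Walk.length_transfer, Walk.length_append, Walk.length_boxProdLeft,
          Walk.length_boxProdRight, Nat.cast_add, hwG, hwH, add_comm]
  · rw [not_and_or, not_ne_iff, not_ne_iff] at hfin
    rcases hfin with h | h <;> simp [h]

lemma monitors_boxProd_of_separates {b₀ b₁ b₂ : β} (hreach : H.Reachable b₀ b₂)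
    (hsep : ¬ (H.deleteEdges {s(b₁, b₂)}).Reachable b₀ b₂) (a : α) :
    monitors (G □ H) (a, b₀) s((a, b₁), (a, b₂)) := by
  set K := (G □ H).deleteEdges {s((a, b₁), (a, b₂))}
  refine ⟨(a, b₂), fun heq => ?_⟩
  have hdist : (G □ H).edist (a, b₀) (a, b₂) = H.dist b₀ b₂ := by
    simp [hreach.coe_dist_eq_edist]
  obtain ⟨w, hw⟩ := exists_walk_of_edist_eq_coe (heq.symm.trans hdist)
  obtain ⟨⟨⟨⟨p, q⟩, ⟨p', q'⟩⟩, hadj⟩, hd, hfst, hsnd⟩ := w.exists_boundary_dart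
    {x | ¬ (H.deleteEdges {s(b₁, b₂)}).Reachable x.2 b₂} hsep (by simp)
  simp only [Set.mem_ofPred_eq, not_not] at hfst hsnd
  -- the dart crossing the cut must be a copy of `s(b₁, b₂)` in a fibre other than `a`
  have hne : p ≠ a := by
    rintro rfl
    obtain ⟨hadj, hne⟩ := deleteEdges_adj.1 hadj
    dsimp only at hadj hne
    rcases boxProd_adj.1 hadj with ⟨-, rfl⟩ | ⟨hH, rfl⟩
    · exact hfst hsnd
    · by_cases he : s(q, q') = s(b₁, b₂)
      · exact hne (by simp_all)
      · exact hfst ((deleteEdges_adj.2 ⟨hH, he⟩).reachable.trans hsnd)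
  have hK := w.edist_add_edist_le_length (w.dart_fst_mem_support_of_mem_darts hd)
  have : (H.dist b₀ b₂ : ℕ∞) + 2 ≤ H.dist b₀ b₂ := calc
    (H.dist b₀ b₂ : ℕ∞) + 2 ≤ H.edist b₀ q + H.edist q b₂ + (G.edist a p + G.edist p a) := by
      rw [hreach.coe_dist_eq_edist]
      gcongr
      · exact H.edist_triangle
      · have hG : 1 ≤ G.edist a p := Order.one_le_iff_pos.2 (edist_pos_of_ne hne.symm)
        rw [edist_comm (u := p), ← one_add_one_eq_two]
        exact add_le_add hG hG
    _ = (G □ H).edist (a, b₀) (p, q) + (G □ H).edist (p, q) (a, b₂) := by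
      simp only [edist_boxProd]; ring
    _ ≤ K.edist (a, b₀) (p, q) + K.edist (p, q) (a, b₂) :=
      add_le_add (edist_anti (deleteEdges_le _)) (edist_anti (deleteEdges_le _))
    _ ≤ w.length := hK
    _ = H.dist b₀ b₂ := by rw [hw]
  norm_cast at this
  omega

lemma monitors_boxProd_pathGraph_right {n : ℕ} (a : α) (b₀ : Fin n) {b₁ b₂ : Fin n}
    (h : (pathGraph n).Adj b₁ b₂) : monitors (G □ pathGraph n) (a, b₀) s((a, b₁), (a, b₂)) := by
  wlog h12 : b₁.val + 1 = b₂.val generalizing b₁ b₂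
  · rw [Sym2.eq_swap]
    exact this h.symm ((pathGraph_adj.1 h).resolve_left h12)
  rcases le_or_gt b₀ b₁ with h0 | h0
  · exact monitors_boxProd_of_separates (pathGraph_preconnected n _ _)
      (pathGraph_not_reachable_deleteEdges h12 h0 (Fin.lt_def.2 (by omega))) a
  · rw [Sym2.eq_swap]
    refine monitors_boxProd_of_separates (pathGraph_preconnected n _ _) (fun hr => ?_) a
    rw [Sym2.eq_swap] at hr
    exact pathGraph_not_reachable_deleteEdges h12 le_rfl h0 hr.symm

lemma monitors_boxProd_pathGraph_left {m : ℕ} (b : β) (a₀ : Fin m) {a₁ a₂ : Fin m}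
    (h : (pathGraph m).Adj a₁ a₂) : monitors (pathGraph m □ H) (a₀, b) s((a₁, b), (a₂, b)) := by
  rw [← monitors_iso_iff (boxProdComm _ _)]
  simpa using monitors_boxProd_pathGraph_right b a₀ h

lemma not_monitors_boxProd_of_snd_ne {b₀ b : β} (h : b₀ ≠ b) (a₀ a₁ a₂ : α) :
    ¬ monitors (G □ H) (a₀, b₀) s((a₁, b), (a₂, b)) := by
  rw [← monitors_iso_iff (boxProdComm _ _)]
  simpa using not_monitors_boxProd_of_fst_ne h a₀ a₁ a₂

lemma IsDEMSet.surjOn_fst {M : Set (α × β)} (hM : IsDEMSet (G □ H) M) {b₁ b₂ : β}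
    (hb : H.Adj b₁ b₂) : Set.SurjOn Prod.fst M Set.univ := fun a _ => by
  obtain ⟨⟨a₀, b₀⟩, hx, hmon⟩ := hM s((a, b₁), (a, b₂)) (boxProd_adj_right.2 hb)
  exact ⟨(a₀, b₀), hx, by_contra fun h => not_monitors_boxProd_of_fst_ne h b₀ b₁ b₂ hmon⟩

lemma IsDEMSet.surjOn_snd {M : Set (α × β)} (hM : IsDEMSet (G □ H) M) {a₁ a₂ : α}
    (ha : G.Adj a₁ a₂) : Set.SurjOn Prod.snd M Set.univ := fun b _ => by
  obtain ⟨⟨a₀, b₀⟩, hx, hmon⟩ := hM s((a₁, b), (a₂, b)) (boxProd_adj_left.2 ha)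
  exact ⟨(a₀, b₀), hx, by_contra fun h => not_monitors_boxProd_of_snd_ne h a₀ a₁ a₂ hmon⟩

end BoxProd

section Grid

variable {m n : ℕ}

lemma exists_card_eq_max_surjOn (hm : 0 < m) (hn : 0 < n) :
    ∃ M : Finset (Fin m × Fin n), M.card = max m n ∧
      Set.SurjOn Prod.fst (M : Set (Fin m × Fin n)) Set.univ ∧
      Set.SurjOn Prod.snd (M : Set (Fin m × Fin n)) Set.univ := by
  let f : Fin (max m n) → Fin m × Fin n := fun k =>
    (⟨min k (m - 1), by omega⟩, ⟨min k (n - 1), by omega⟩)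
  have hf : f.Injective := fun k l hkl => by
    simp only [f, Prod.mk.injEq, Fin.mk.injEq] at hkl
    omega
  refine ⟨Finset.univ.image f, by simp [Finset.card_image_of_injective _ hf], ?_, ?_⟩
  · exact fun i _ => ⟨f ⟨i, by omega⟩, by simp, Fin.ext (by simp [f]; omega)⟩
  · exact fun j _ => ⟨f ⟨j, by omega⟩, by simp, Fin.ext (by simp [f]; omega)⟩

lemma max_le_card_of_surjOn (M : Finset (Fin m × Fin n))
    (hfst : Set.SurjOn Prod.fst (M : Set (Fin m × Fin n)) Set.univ)
    (hsnd : Set.SurjOn Prod.snd (M : Set (Fin m × Fin n)) Set.univ) : max m n ≤ M.card := by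
  have h1 := Finset.card_le_card_of_surjOn Prod.fst (t := Finset.univ) (by simpa using hfst)
  have h2 := Finset.card_le_card_of_surjOn Prod.snd (t := Finset.univ) (by simpa using hsnd)
  simp only [Finset.card_univ, Fintype.card_fin] at h1 h2
  exact max_le h1 h2

lemma isDEMSet_pathGraph_boxProd_pathGraph_iff (hm : 2 ≤ m) (hn : 2 ≤ n)
    (M : Set (Fin m × Fin n)) : IsDEMSet (pathGraph m □ pathGraph n) M ↔
      Set.SurjOn Prod.fst M Set.univ ∧ Set.SurjOn Prod.snd M Set.univ := by
  refine ⟨fun hM => ⟨hM.surjOn_fst (b₁ := ⟨0, by omega⟩) (b₂ := ⟨1, by omega⟩) ?_,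
    hM.surjOn_snd (a₁ := ⟨0, by omega⟩) (a₂ := ⟨1, by omega⟩) ?_⟩, fun ⟨hfst, hsnd⟩ e he => ?_⟩
  · exact pathGraph_adj.2 (Or.inl rfl)
  · exact pathGraph_adj.2 (Or.inl rfl)
  induction e using Sym2.ind with | _ x y =>
  obtain ⟨a₁, b₁⟩ := x
  obtain ⟨a₂, b₂⟩ := y
  rcases boxProd_adj.1 he with ⟨hG, rfl : b₁ = b₂⟩ | ⟨hH, rfl : a₁ = a₂⟩
  · obtain ⟨⟨a₀, b₀⟩, hx, rfl⟩ := hsnd (Set.mem_univ b₁)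
    exact ⟨_, hx, monitors_boxProd_pathGraph_left b₀ a₀ hG⟩
  · obtain ⟨⟨a₀, b₀⟩, hx, rfl⟩ := hfst (Set.mem_univ a₁)
    exact ⟨_, hx, monitors_boxProd_pathGraph_right a₀ b₀ hH⟩

end Grid

theorem stmt7 (a b : ℕ) (ha : 2 ≤ a) (hb : 2 ≤ b) :
    dem (Fin a × Fin b) (SimpleGraph.pathGraph a □ SimpleGraph.pathGraph b) = max a b := by
  obtain ⟨M, hcard, hfst, hsnd⟩ := exists_card_eq_max_surjOn (m := a) (n := b) (by omega) (by omega)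
  refine dem_eq_of_isDEMSet M
    ((isDEMSet_pathGraph_boxProd_pathGraph_iff ha hb _).2 ⟨hfst, hsnd⟩) hcard fun N hN => ?_
  obtain ⟨hNfst, hNsnd⟩ := (isDEMSet_pathGraph_boxProd_pathGraph_iff ha hb _).1 hN
  exact max_le_card_of_surjOn N hNfst hNsnd
end

section
/- In any connected graph G, every vertex cover of G is a distance-edge-monitoring set; hence dem(G) ≤ τ(G), where τ(G) is the vertex cover number. -/
open SimpleGraph

lemma endpoint_monitors {V : Type*} (G : SimpleGraph V) {a b : V} (hab : G.Adj a b) :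
    monitors G a s(a, b) := by
  refine ⟨b, ?_⟩
  have h1 : G.edist a b = 1 := edist_eq_one_iff_adj.mpr hab
  intro h
  have h2 : (G.deleteEdges {s(a, b)}).Adj a b := by
    rw [← edist_eq_one_iff_adj, ← h, h1]
  rw [deleteEdges_adj] at h2
  exact h2.2 rfl

lemma vc_dem {V : Type*} (G : SimpleGraph V) (C : Set V) (hC : IsVC G C) : IsDEMSet G C := by
  intro e he
  induction e with
  | _ a b =>
    obtain ⟨v, hvC, hv⟩ := hC s(a, b) he
    rw [Sym2.mem_iff] at hv
    rw [mem_edgeSet] at he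
    rcases hv with rfl | rfl
    · exact ⟨v, hvC, endpoint_monitors G he⟩
    · refine ⟨v, hvC, ?_⟩
      rw [Sym2.eq_swap]
      exact endpoint_monitors G he.symm

theorem stmt9 {V : Type*} [Fintype V] (G : SimpleGraph V) (hG : G.Connected) :
    (∀ C : Set V, IsVC G C → IsDEMSet G C) ∧ dem V G ≤ vcNum V G := by
  refine ⟨fun C hC => vc_dem G C hC, ?_⟩
  have hne : {k | ∃ C : Finset V, C.card = k ∧ IsVC G ↑C}.Nonempty :=
    ⟨(Finset.univ : Finset V).card, Finset.univ, rfl, fun e he => by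
      induction e with
      | _ a b => exact ⟨a, by simp, Sym2.mem_mk_left a b⟩⟩
  obtain ⟨C, hCcard, hCvc⟩ := Nat.sInf_mem hne
  exact Nat.sInf_le ⟨C, hCcard, vc_dem G ↑C hCvc⟩
end

section
/- For a connected graph G of order n ≥ 2, dem(G) = n-1 if and only if G is the complete graph on n vertices. -/
open SimpleGraph

/-! Every vertex cover monitors all edges, since deleting an edge destroys the distance `1`
between its endpoints; so the complement of an independent set bounds `dem` from above.
Conversely, in `K_n` deleting `uv` changes no distance other than `d(u, v)`, so a monitoring
set of `K_n` must be a vertex cover, i.e. miss at most one vertex. -/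

open Finset

namespace SimpleGraph

variable {V : Type*}

lemma monitors_of_adj {G : SimpleGraph V} {a b : V} (h : G.Adj a b) : monitors G a s(a, b) := by
  refine ⟨b, ?_⟩
  rw [edist_eq_one_iff_adj.mpr h, ne_comm, Ne, edist_eq_one_iff_adj]
  simp

lemma IsVertexCover.isDEMSet {G : SimpleGraph V} {C : Set V} (hC : G.IsVertexCover C) :
    IsDEMSet G C := by
  refine Sym2.ind fun a b (hab : G.Adj a b) ↦ ?_
  rcases hC hab with ha | hb
  · exact ⟨a, ha, monitors_of_adj hab⟩
  · exact ⟨b, hb, Sym2.eq_swap (a := a) ▸ monitors_of_adj hab.symm⟩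

lemma mem_of_monitors_top {x : V} {e : Sym2 V} (h : monitors (⊤ : SimpleGraph V) x e) :
    x ∈ e := by
  by_contra hx
  obtain ⟨y, hy⟩ := h
  rcases eq_or_ne x y with rfl | hxy
  · simp at hy
  have hdel : ((⊤ : SimpleGraph V).deleteEdges {e}).Adj x y := by
    refine (deleteEdges_adj ..).mpr ⟨hxy, ?_⟩
    rintro rfl
    exact hx (Sym2.mem_mk_left x y)
  rw [edist_eq_one_iff_adj.mpr hxy, edist_eq_one_iff_adj.mpr hdel] at hy
  exact hy rfl

lemma IsDEMSet.isVertexCover_top {M : Set V} (hM : IsDEMSet (⊤ : SimpleGraph V) M) :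
    (⊤ : SimpleGraph V).IsVertexCover M := by
  intro a b hab
  obtain ⟨x, hxM, hx⟩ := hM s(a, b) hab
  rcases Sym2.mem_iff.mp (mem_of_monitors_top hx) with rfl | rfl
  exacts [.inl hxM, .inr hxM]

lemma isIndepSet_top_iff {s : Set V} : (⊤ : SimpleGraph V).IsIndepSet s ↔ s.Subsingleton := by
  rw [← isClique_compl, compl_top, isClique_bot_iff]

variable [Fintype V]

lemma exists_isDEMSet_card_eq_dem (G : SimpleGraph V) :
    ∃ M : Finset V, #M = dem V G ∧ IsDEMSet G M := by
  have huniv : IsDEMSet G (univ : Finset V) := by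
    simpa using (isVertexCover_univ (G := G)).isDEMSet
  exact Nat.sInf_mem (s := {k | ∃ M : Finset V, #M = k ∧ IsDEMSet G M}) ⟨_, univ, rfl, huniv⟩

variable [DecidableEq V]

lemma dem_le_card_sub_card_of_isIndepSet {G : SimpleGraph V} {s : Finset V}
    (hs : G.IsIndepSet s) : dem V G ≤ Fintype.card V - #s := by
  refine Nat.sInf_le ⟨sᶜ, card_compl s, ?_⟩
  rw [coe_compl]
  exact (isVertexCover_compl.mpr hs).isDEMSet

lemma dem_lt_card_sub_one_of_ne_top {G : SimpleGraph V} (hG : G ≠ ⊤) :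
    dem V G < Fintype.card V - 1 := by
  obtain ⟨u, v, huv, hnadj⟩ := ne_top_iff_exists_not_adj.mp hG
  have hindep : G.IsIndepSet ({u, v} : Finset V) := by
    rw [coe_pair]
    exact Set.pairwise_pair.mpr fun _ ↦ ⟨hnadj, fun h ↦ hnadj h.symm⟩
  have hcard : #({u, v} : Finset V) = 2 := card_pair huv
  have htwo : 2 ≤ Fintype.card V := hcard ▸ card_le_univ _
  have := dem_le_card_sub_card_of_isIndepSet hindep
  omega

lemma card_sub_one_le_card_of_isDEMSet_top {M : Finset V}
    (hM : IsDEMSet (⊤ : SimpleGraph V) M) : Fintype.card V - 1 ≤ #M := by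
  have hindep : (⊤ : SimpleGraph V).IsIndepSet ↑Mᶜ := by
    rw [coe_compl, ← isVertexCover_compl, compl_compl]
    exact hM.isVertexCover_top
  have := card_le_one_iff_subsingleton.mpr (isIndepSet_top_iff.mp hindep)
  rw [card_compl] at this
  omega

lemma dem_top : dem V (⊤ : SimpleGraph V) = Fintype.card V - 1 := by
  obtain ⟨M, hMcard, hM⟩ := exists_isDEMSet_card_eq_dem (⊤ : SimpleGraph V)
  -- a single vertex, or `∅` when `V` is empty (where `card V - 1` truncates to `0`)
  obtain ⟨s, -, hs⟩ := exists_subset_card_eq (s := (univ : Finset V))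
    (n := min 1 (Fintype.card V)) (card_univ (α := V) ▸ min_le_right _ _)
  have hindep : (⊤ : SimpleGraph V).IsIndepSet s :=
    isIndepSet_top_iff.mpr (card_le_one_iff_subsingleton.mp (hs ▸ min_le_left _ _))
  have := dem_le_card_sub_card_of_isIndepSet hindep
  have := card_sub_one_le_card_of_isDEMSet_top hM
  omega

end SimpleGraph

theorem stmt10_general {V : Type*} [Fintype V] (G : SimpleGraph V) :
    dem V G = Fintype.card V - 1 ↔ G = ⊤ := by
  classical
  refine ⟨fun h ↦ ?_, fun h ↦ h ▸ dem_top⟩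
  by_contra hG
  exact (dem_lt_card_sub_one_of_ne_top hG).ne h

theorem stmt10 {V : Type*} [Fintype V] (G : SimpleGraph V) (hG : G.Connected)
    (hn : 2 ≤ Fintype.card V) :
    dem V G = Fintype.card V - 1 ↔ G = ⊤ :=
  stmt10_general G
end

section
/- For a, b ≥ 1, the complete bipartite graph K_{a,b} satisfies dem(K_{a,b}) = min{a,b}. -/
open SimpleGraph

variable {V : Type*}

lemma aux_edist_le_two {G : SimpleGraph V} {x w y : V} (h1 : G.Adj x w) (h2 : G.Adj w y) :
    G.edist x y ≤ 2 := by
  have := SimpleGraph.edist_le (Walk.cons h1 (Walk.cons h2 Walk.nil))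
  simpa using this

lemma aux_two_le_edist {G : SimpleGraph V} {x y : V} (hne : x ≠ y) (hna : ¬ G.Adj x y) :
    2 ≤ G.edist x y := by
  have h1 : G.edist x y ≠ 1 := fun h => hna (SimpleGraph.edist_eq_one_iff_adj.mp h)
  have h0 : 1 ≤ G.edist x y := Order.one_le_iff_pos.mpr (G.edist_pos_of_ne hne)
  have : 1 < G.edist x y := lt_of_le_of_ne h0 (Ne.symm h1)
  exact Order.add_one_le_of_lt this

theorem stmt12 (a b : ℕ) (ha : 1 ≤ a) (hb : 1 ≤ b) :
    dem (Fin a ⊕ Fin b) (completeBipartiteGraph (Fin a) (Fin b)) = min a b := by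
  set G := completeBipartiteGraph (Fin a) (Fin b) with hG
  set S := {k | ∃ M : Finset (Fin a ⊕ Fin b), M.card = k ∧ IsDEMSet G ↑M} with hS
  -- any endpoint monitors its edge
  have hmon : ∀ (u : Fin a) (v : Fin b) (x : Fin a ⊕ Fin b),
      (x = Sum.inl u ∨ x = Sum.inr v) → monitors G x s(Sum.inl u, Sum.inr v) := by
    rintro u v x hx
    have hadj : G.Adj (Sum.inl u) (Sum.inr v) := by simp [hG]
    have hnadj : ¬ (G.deleteEdges {s(Sum.inl u, Sum.inr v)}).Adj (Sum.inl u) (Sum.inr v) := by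
      simp
    rcases hx with rfl | rfl
    · exact ⟨Sum.inr v, by
        rw [edist_eq_one_iff_adj.mpr hadj]
        exact fun h => hnadj (edist_eq_one_iff_adj.mp h.symm)⟩
    · exact ⟨Sum.inl u, by
        rw [edist_eq_one_iff_adj.mpr hadj.symm]
        intro h
        exact hnadj (edist_eq_one_iff_adj.mp h.symm).symm⟩
  -- decompose edges
  have hedge : ∀ e ∈ G.edgeSet, ∃ (u : Fin a) (v : Fin b), e = s(Sum.inl u, Sum.inr v) := by
    intro e he
    induction e with
    | _ x y =>
      rw [mem_edgeSet] at he
      rcases x with p | p <;> rcases y with q | q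
      · rw [hG] at he; simp at he
      · exact ⟨p, q, rfl⟩
      · exact ⟨q, p, Sym2.eq_swap⟩
      · rw [hG] at he; simp at he
  have hAmem : a ∈ S := by
    refine ⟨Finset.univ.image Sum.inl, ?_, ?_⟩
    · rw [Finset.card_image_of_injective _ Sum.inl_injective]; simp
    · intro e he
      obtain ⟨u, v, rfl⟩ := hedge e he
      exact ⟨Sum.inl u, by simp, hmon u v _ (Or.inl rfl)⟩
  have hBmem : b ∈ S := by
    refine ⟨Finset.univ.image Sum.inr, ?_, ?_⟩
    · rw [Finset.card_image_of_injective _ Sum.inr_injective]; simp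
    · intro e he
      obtain ⟨u, v, rfl⟩ := hedge e he
      exact ⟨Sum.inr v, by simp, hmon u v _ (Or.inr rfl)⟩
  have hne : S.Nonempty := ⟨a, hAmem⟩
  refine le_antisymm (le_min (Nat.sInf_le hAmem) (Nat.sInf_le hBmem)) ?_
  -- lower bound
  obtain ⟨M, hMcard, hMdem⟩ := Nat.sInf_mem hne
  rw [dem, ← hS, ← hMcard]
  by_contra hlt
  push_neg at hlt
  have hla : M.card < a := lt_of_lt_of_le hlt (min_le_left a b)
  have hlb : M.card < b := lt_of_lt_of_le hlt (min_le_right a b)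
  have hu : ∃ u : Fin a, Sum.inl u ∉ M := by
    by_contra h
    push_neg at h
    have : (Finset.univ.image (Sum.inl : Fin a → Fin a ⊕ Fin b)) ⊆ M := by
      intro x hx; simp at hx; obtain ⟨u, rfl⟩ := hx; exact h u
    have := Finset.card_le_card this
    rw [Finset.card_image_of_injective _ Sum.inl_injective] at this
    simp at this; omega
  have hv : ∃ v : Fin b, Sum.inr v ∉ M := by
    by_contra h
    push_neg at h
    have : (Finset.univ.image (Sum.inr : Fin b → Fin a ⊕ Fin b)) ⊆ M := by
      intro x hx; simp at hx; obtain ⟨v, rfl⟩ := hx; exact h v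
    have := Finset.card_le_card this
    rw [Finset.card_image_of_injective _ Sum.inr_injective] at this
    simp at this; omega
  obtain ⟨u, hu⟩ := hu
  obtain ⟨v, hv⟩ := hv
  have he : s(Sum.inl u, Sum.inr v) ∈ G.edgeSet := by simp [hG]
  obtain ⟨x, hxM, y, hy⟩ := hMdem _ he
  -- M nonempty, so a,b ≥ 2
  have hM1 : 1 ≤ M.card := Finset.card_pos.mpr ⟨x, hxM⟩
  have ha2 : 2 ≤ a := by omega
  have hb2 : 2 ≤ b := by omega
  obtain ⟨u', hu'⟩ := Fintype.exists_ne_of_one_lt_card (by rw [Fintype.card_fin]; omega) u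
  obtain ⟨v', hv'⟩ := Fintype.exists_ne_of_one_lt_card (by rw [Fintype.card_fin]; omega) v
  have hxu : x ≠ Sum.inl u := fun h => hu (h ▸ hxM)
  have hxv : x ≠ Sum.inr v := fun h => hv (h ▸ hxM)
  set G' := G.deleteEdges {s(Sum.inl u, Sum.inr v)} with hG'
  apply hy
  refine le_antisymm (edist_anti (deleteEdges_le _)) ?_
  -- show G'.edist x y ≤ G.edist x y by cases
  have hadj' : ∀ (p : Fin a) (q : Fin b), (p ≠ u ∨ q ≠ v) → G'.Adj (Sum.inl p) (Sum.inr q) := by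
    intro p q hpq
    rw [hG', deleteEdges_adj]
    refine ⟨by simp [hG], ?_⟩
    simp only [Set.mem_singleton_iff, Sym2.eq_iff]
    rintro (⟨h1, h2⟩ | ⟨h1, h2⟩)
    · rcases hpq with h | h
      · exact h (Sum.inl_injective h1)
      · exact h (Sum.inr_injective h2)
    · exact Sum.inl_ne_inr h1
  rcases x with p | p <;> rcases y with q | q
  · -- inl, inl
    rcases eq_or_ne p q with rfl | hpq
    · simp
    · have h2le : G'.edist (Sum.inl p) (Sum.inl q) ≤ 2 :=
        aux_edist_le_two (hadj' p v' (Or.inr hv')) (hadj' q v' (Or.inr hv')).symm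
      have hge : 2 ≤ G.edist (Sum.inl p) (Sum.inl q) :=
        aux_two_le_edist (by simp [hpq]) (by simp [hG])
      exact le_trans h2le hge
  · -- inl, inr
    have hp : p ≠ u := fun h => hxu (by rw [h])
    have : G'.Adj (Sum.inl p) (Sum.inr q) := hadj' p q (Or.inl hp)
    calc G'.edist (Sum.inl p) (Sum.inr q) ≤ 1 := by
            rw [edist_eq_one_iff_adj.mpr this]
         _ ≤ G.edist (Sum.inl p) (Sum.inr q) :=
            Order.one_le_iff_pos.mpr (G.edist_pos_of_ne (by simp))
  · -- inr, inl
    have hp : p ≠ v := fun h => hxv (by rw [h])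
    have : G'.Adj (Sum.inr p) (Sum.inl q) := (hadj' q p (Or.inr hp)).symm
    calc G'.edist (Sum.inr p) (Sum.inl q) ≤ 1 := by
            rw [edist_eq_one_iff_adj.mpr this]
         _ ≤ G.edist (Sum.inr p) (Sum.inl q) :=
            Order.one_le_iff_pos.mpr (G.edist_pos_of_ne (by simp))
  · -- inr, inr
    rcases eq_or_ne p q with rfl | hpq
    · simp
    · have h2le : G'.edist (Sum.inr p) (Sum.inr q) ≤ 2 :=
        aux_edist_le_two (hadj' u' p (Or.inl hu')).symm (hadj' u' q (Or.inl hu'))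
      have hge : 2 ≤ G.edist (Sum.inr p) (Sum.inr q) :=
        aux_two_le_edist (by simp [hpq]) (by simp [hG])
      exact le_trans h2le hge
end

section
/- For every d ≥ 1, the hypercube graph Q_d of dimension d satisfies dem(Q_d) = 2^{d-1}. -/
/-! Deleting an edge `e` of `Q_d` changes no distance from a vertex `x ∉ e`: walking back from any
`y` towards `x` one coordinate at a time, at most one of the available last steps is `e`, and if it
is, `x` is not its other endpoint, so another coordinate is still left to flip. Thus only the
endpoints of `e` monitor it and distance-edge-monitoring sets are exactly the vertex covers. The
perfect matching `x ↦ flipCoord j x` shows that a cover has at least `2 ^ (d - 1)` vertices, and the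
vertices of even weight form a cover of that size. -/

open SimpleGraph

/-- The hypercube graph of dimension `d`: vertices are `Fin d → Bool`, and two vertices
are adjacent iff they differ in exactly one coordinate. -/
def hypercubeGraph (d : ℕ) : SimpleGraph (Fin d → Bool) :=
  SimpleGraph.fromRel (fun x y => ∃! i, x i ≠ y i)

open Finset Function

theorem monitors_of_mem {V : Type*} {G : SimpleGraph V} {e : Sym2 V} (he : e ∈ G.edgeSet)
    {x : V} (hx : x ∈ e) : monitors G x e := by
  refine ⟨Sym2.Mem.other hx, fun h => ?_⟩
  rw [← Sym2.other_spec hx, SimpleGraph.mem_edgeSet] at he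
  have hdel : ¬(G.deleteEdges {e}).Adj x (Sym2.Mem.other hx) := by
    simp [Sym2.other_spec hx]
  rw [edist_eq_one_iff_adj.mpr he, eq_comm, edist_eq_one_iff_adj] at h
  exact hdel h

theorem dem_eq_vcNum_of_forall_not_monitors {V : Type*} [Fintype V] {G : SimpleGraph V}
    (h : ∀ e ∈ G.edgeSet, ∀ x ∉ e, ¬monitors G x e) : dem V G = vcNum V G := by
  have hiff (M : Set V) : IsDEMSet G M ↔ IsVC G M :=
    forall₂_congr fun e he => exists_congr fun x => and_congr_right fun _ =>
      ⟨not_imp_not.mp (h e he x), monitors_of_mem he⟩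
  simp only [dem, vcNum, hiff]

theorem card_le_two_mul_card_of_isVC {V : Type*} [Fintype V] [DecidableEq V]
    {G : SimpleGraph V} {f : V → V} (hf : Involutive f) (hadj : ∀ x, G.Adj x (f x))
    {C : Finset V} (hC : IsVC G C) : Fintype.card V ≤ 2 * #C := by
  have hcover : (univ : Finset V) ⊆ C ∪ C.image f := by
    intro x _
    obtain ⟨v, hv, hve⟩ := hC _ (G.mem_edgeSet.mpr (hadj x))
    rcases Sym2.mem_iff.mp hve with rfl | rfl
    · exact mem_union_left _ hv
    · exact mem_union_right _ (mem_image.mpr ⟨f x, hv, hf x⟩)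
  calc Fintype.card V ≤ #(C ∪ C.image f) := card_le_card hcover
    _ ≤ #C + #(C.image f) := card_union_le _ _
    _ ≤ 2 * #C := by linarith [card_image_le (s := C) (f := f)]

theorem two_mul_card_eq_of_involutive {V : Type*} [Fintype V] [DecidableEq V] {f : V → V}
    (hf : Involutive f) {s : Finset V} (hs : ∀ x, x ∈ s ↔ f x ∉ s) :
    2 * #s = Fintype.card V := by
  have hcompl : #sᶜ = #s :=
    card_nbij' f f (fun x hx => (hs (f x)).mpr (by rw [hf x]; exact mem_compl.mp hx))
      (fun x hx => mem_compl.mpr ((hs x).mp hx)) (fun x _ => hf x) (fun x _ => hf x)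
  rw [← card_add_card_compl s, hcompl, two_mul]

def flipCoord {d : ℕ} (j : Fin d) (x : Fin d → Bool) : Fin d → Bool := update x j (!x j)

namespace flipCoord

variable {d : ℕ} (j : Fin d) (x : Fin d → Bool)

@[simp]
theorem apply_self : flipCoord j x j = !x j := by
  simp [flipCoord]

@[simp]
theorem apply_of_ne {i : Fin d} (h : i ≠ j) : flipCoord j x i = x i := by
  simp [flipCoord, h]

theorem involutive : Involutive (flipCoord j) := fun x => by
  ext i
  rcases eq_or_ne i j with rfl | h <;> simp [*]

theorem hammingDist_eq_one : hammingDist x (flipCoord j x) = 1 := by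
  refine card_eq_one.mpr ⟨j, ?_⟩
  ext i
  rcases eq_or_ne i j with rfl | h <;> simp [*]

variable {j x}

theorem hammingDist_lt {y : Fin d → Bool} (h : x j ≠ y j) :
    hammingDist x (flipCoord j y) < hammingDist x y := by
  refine card_lt_card ((ssubset_iff_of_subset ?_).mpr ⟨j, by simpa using h, by simp_all⟩)
  intro i
  rcases eq_or_ne i j with rfl | hij <;> simp_all

theorem card_true_of_eq_false (h : x j = false) :
    #{i | flipCoord j x i} = #{i | x i} + 1 := by
  rw [← card_insert_of_notMem (a := j) (s := {i | x i}) (by simp [h])]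
  congr 1
  ext i
  rcases eq_or_ne i j with rfl | hij <;> simp [*]

theorem even_card_true_iff : Even #{i | flipCoord j x i} ↔ ¬Even #{i | x i} := by
  cases h : x j
  · rw [card_true_of_eq_false h, Nat.even_add_one]
  · have := card_true_of_eq_false (x := flipCoord j x) (j := j) (by simp [h])
    rw [involutive j x] at this
    rw [this, Nat.even_add_one, not_not]

end flipCoord

namespace hypercubeGraph

variable {d : ℕ}

theorem adj_iff {x y : Fin d → Bool} : (hypercubeGraph d).Adj x y ↔ ∃ j, y = flipCoord j x := by
  rw [hypercubeGraph, fromRel_adj]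
  constructor
  · rintro ⟨-, h⟩
    obtain ⟨j, hj, huniq⟩ : ∃! i, x i ≠ y i := by
      rcases h with h | h
      exacts [h, by simpa only [ne_comm] using h]
    refine ⟨j, funext fun i => ?_⟩
    rcases eq_or_ne i j with rfl | hij
    · simpa using Bool.eq_not_iff.mpr hj.symm
    · simpa [hij] using (not_not.mp (mt (huniq i) hij)).symm
  · rintro ⟨j, rfl⟩
    refine ⟨fun h => by simpa using congrFun h j, Or.inl ⟨j, by simp, fun i hi => ?_⟩⟩
    by_contra hij
    simp [hij] at hi

theorem adj_flipCoord (j : Fin d) (x : Fin d → Bool) : (hypercubeGraph d).Adj x (flipCoord j x) :=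
  adj_iff.mpr ⟨j, rfl⟩

theorem hammingDist_le_length {x y : Fin d → Bool} (p : (hypercubeGraph d).Walk x y) :
    hammingDist x y ≤ p.length := by
  induction p with
  | nil => simp
  | @cons u v w h q ih =>
    obtain ⟨j, rfl⟩ := adj_iff.mp h
    have := hammingDist_triangle u (flipCoord j u) w
    rw [flipCoord.hammingDist_eq_one] at this
    simp only [Walk.length_cons]
    omega

theorem hammingDist_le_edist (x y : Fin d → Bool) :
    (hammingDist x y : ℕ∞) ≤ (hypercubeGraph d).edist x y := by
  rcases eq_or_ne ((hypercubeGraph d).edist x y) ⊤ with h | h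
  · simp [h]
  · obtain ⟨p, hp⟩ := exists_walk_of_edist_ne_top h
    rw [← hp]
    exact_mod_cast hammingDist_le_length p

theorem exists_adj_deleteEdges_hammingDist_lt {e : Sym2 (Fin d → Bool)} {x y : Fin d → Bool}
    (hx : x ∉ e) (hxy : x ≠ y) :
    ∃ z, ((hypercubeGraph d).deleteEdges {e}).Adj z y ∧ hammingDist x z < hammingDist x y := by
  have hcandidate (k : Fin d) (hk : x k ≠ y k) (hke : s(flipCoord k y, y) ≠ e) :
      ∃ z, ((hypercubeGraph d).deleteEdges {e}).Adj z y ∧ hammingDist x z < hammingDist x y :=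
    ⟨flipCoord k y, (deleteEdges_adj ..).mpr ⟨(adj_flipCoord k y).symm, by simpa using hke⟩,
      flipCoord.hammingDist_lt hk⟩
  obtain ⟨j, hj⟩ : ∃ j, x j ≠ y j := by
    by_contra! h
    exact hxy (funext h)
  by_cases hje : s(flipCoord j y, y) = e
  · have hxz : x ≠ flipCoord j y := fun h => hx (hje ▸ h ▸ Sym2.mem_mk_left _ _)
    obtain ⟨k, hk⟩ : ∃ k, x k ≠ flipCoord j y k := by
      by_contra! h
      exact hxz (funext h)
    have hkj : k ≠ j := by
      rintro rfl
      exact hk (by simpa using Bool.eq_not_iff.mpr hj)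
    refine hcandidate k (by simpa [hkj] using hk) fun hke => ?_
    have := congrFun (Sym2.congr_left.mp (hke.trans hje.symm)) j
    simp [hkj.symm] at this
  · exact hcandidate j hj hje

theorem edist_deleteEdges_le_hammingDist {e : Sym2 (Fin d → Bool)} {x : Fin d → Bool}
    (hx : x ∉ e) (y : Fin d → Bool) :
    ((hypercubeGraph d).deleteEdges {e}).edist x y ≤ hammingDist x y := by
  induction hn : hammingDist x y using Nat.strong_induction_on generalizing y with
  | _ n ih =>
    rcases eq_or_ne x y with rfl | hxy
    · simp
    obtain ⟨z, hzy, hz⟩ := exists_adj_deleteEdges_hammingDist_lt hx hxy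
    calc _ ≤ ((hypercubeGraph d).deleteEdges {e}).edist x z + 1 := by
          rw [← edist_eq_one_iff_adj.mpr hzy]; exact SimpleGraph.edist_triangle
      _ ≤ (hammingDist x z : ℕ∞) + 1 := by gcongr; exact ih _ (hn ▸ hz) z rfl
      _ ≤ n := by rw [← hn]; exact_mod_cast hz

theorem not_monitors_of_notMem {e : Sym2 (Fin d → Bool)} {x : Fin d → Bool} (hx : x ∉ e) :
    ¬monitors (hypercubeGraph d) x e := by
  rintro ⟨y, hy⟩
  exact hy <| le_antisymm (edist_anti (deleteEdges_le _))
    ((edist_deleteEdges_le_hammingDist hx y).trans (hammingDist_le_edist x y))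

def evenVertices (d : ℕ) : Finset (Fin d → Bool) := {x | Even #{i | x i}}

theorem isVC_evenVertices : IsVC (hypercubeGraph d) (evenVertices d) := by
  intro e he
  induction e using Sym2.ind with
  | _ x y =>
    obtain ⟨j, rfl⟩ := adj_iff.mp ((hypercubeGraph d).mem_edgeSet.mp he)
    by_cases hx : Even #{i | x i}
    · exact ⟨x, by simpa [evenVertices] using hx, Sym2.mem_mk_left _ _⟩
    · exact ⟨flipCoord j x, by simpa [evenVertices, flipCoord.even_card_true_iff] using hx,
        Sym2.mem_mk_right _ _⟩

theorem two_mul_card_evenVertices (j : Fin d) : 2 * #(evenVertices d) = 2 ^ d := by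
  rw [two_mul_card_eq_of_involutive (flipCoord.involutive j) fun x => ?_]
  · simp
  · simp [evenVertices, flipCoord.even_card_true_iff]

theorem vcNum_eq (j : Fin d) : vcNum (Fin d → Bool) (hypercubeGraph d) = 2 ^ (d - 1) := by
  have hpow : 2 ^ d = 2 * 2 ^ (d - 1) := by
    rw [← pow_succ']
    congr
    have := j.pos
    omega
  refine IsLeast.csInf_eq ⟨⟨evenVertices d, ?_, isVC_evenVertices⟩, ?_⟩
  · have := two_mul_card_evenVertices j
    omega
  · rintro k ⟨C, rfl, hC⟩
    have := card_le_two_mul_card_of_isVC (flipCoord.involutive j) (adj_flipCoord j) hC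
    simp only [Fintype.card_fun, Fintype.card_bool, Fintype.card_fin] at this
    omega

end hypercubeGraph

theorem stmt13 (d : ℕ) (hd : 1 ≤ d) :
    dem (Fin d → Bool) (hypercubeGraph d) = 2 ^ (d - 1) := by
  rw [dem_eq_vcNum_of_forall_not_monitors fun _ _ _ => hypercubeGraph.not_monitors_of_notMem]
  exact hypercubeGraph.vcNum_eq ⟨0, hd⟩
end

section
/- If G is a connected unicyclic graph (feedback edge set number equal to 1), then dem(G) = 2. -/
open SimpleGraph

namespace DemAux
variable {V : Type*} {G : SimpleGraph V}

lemma edges_getElem {u v : V} (p : G.Walk u v) : ∀ i (h : i < p.length),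
    p.edges[i]'(by rwa [SimpleGraph.Walk.length_edges]) = s(p.getVert i, p.getVert (i+1)) := by
  induction p with
  | nil => intro i h; simp at h
  | cons hadj q ih =>
    intro i h
    cases i with
    | zero => simp [SimpleGraph.Walk.getVert_zero]
    | succ j =>
      simp only [SimpleGraph.Walk.edges_cons, SimpleGraph.Walk.getVert_cons_succ]
      rw [List.getElem_cons_succ]
      exact ih j (by simpa [SimpleGraph.Walk.length_cons, Nat.succ_lt_succ_iff] using h)

lemma mem_edges_getVert {u v : V} (p : G.Walk u v) {i : ℕ} (h : i < p.length) :
    s(p.getVert i, p.getVert (i+1)) ∈ p.edges := by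
  rw [← edges_getElem p i h]; exact List.getElem_mem _

lemma mem_edges_iff {u v : V} (p : G.Walk u v) {e : Sym2 V} :
    e ∈ p.edges ↔ ∃ i, ∃ _ : i < p.length, e = s(p.getVert i, p.getVert (i+1)) := by
  constructor
  · intro he
    obtain ⟨i, hi, hg⟩ := List.mem_iff_getElem.mp he
    exact ⟨i, by rwa [SimpleGraph.Walk.length_edges] at hi, by
      rw [← hg, edges_getElem p i (by rwa [SimpleGraph.Walk.length_edges] at hi)]⟩
  · rintro ⟨i, hi, rfl⟩; exact mem_edges_getVert p hi

lemma support_getElem {u v : V} (p : G.Walk u v) : ∀ i (h : i < p.length + 1),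
    p.support[i]'(by rwa [SimpleGraph.Walk.length_support]) = p.getVert i := by
  induction p with
  | nil => intro i h; cases i with
    | zero => simp
    | succ j => simp [SimpleGraph.Walk.length_nil] at h
  | cons hadj q ih =>
    intro i h
    cases i with
    | zero => simp
    | succ j =>
      simp only [SimpleGraph.Walk.support_cons, SimpleGraph.Walk.getVert_cons_succ]
      rw [List.getElem_cons_succ]
      exact ih j (by simpa [SimpleGraph.Walk.length_cons, Nat.succ_lt_succ_iff] using h)

end DemAux

namespace DemAux
variable {V : Type*} {G : SimpleGraph V}
open SimpleGraph.Walk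

lemma cycle_getVert_inj {v : V} {W : G.Walk v v} (hW : W.IsCycle) {i j : ℕ}
    (hi : i < W.length) (hj : j < W.length) (h : W.getVert i = W.getVert j) : i = j := by
  have hnd := hW.support_nodup
  have hlen : W.support.tail.length = W.length := by
    have := W.length_support
    simp [List.length_tail, this]
  have key : ∀ a b : ℕ, 1 ≤ a → a ≤ W.length → 1 ≤ b → b ≤ W.length →
      W.getVert a = W.getVert b → a = b := by
    intro a b ha1 ha2 hb1 hb2 hab
    have hga : W.support.tail[a-1]'(by omega) = W.getVert a := by
      rw [List.getElem_tail, support_getElem W (a-1+1) (by omega)]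
      congr 1; omega
    have hgb : W.support.tail[b-1]'(by omega) = W.getVert b := by
      rw [List.getElem_tail, support_getElem W (b-1+1) (by omega)]
      congr 1; omega
    have heq : W.support.tail[a-1]'(by omega) = W.support.tail[b-1]'(by omega) := by
      rw [hga, hgb]; exact hab
    have := (List.Nodup.getElem_inj_iff hnd).mp heq
    omega
  rcases Nat.eq_zero_or_pos i with rfl | hi1
  · rcases Nat.eq_zero_or_pos j with rfl | hj1
    · rfl
    · exfalso
      have h0 : W.getVert W.length = W.getVert j := by
        rw [W.getVert_length]; rw [W.getVert_zero] at h; exact h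
      have := key W.length j (by omega) le_rfl hj1 (by omega) h0
      omega
  · rcases Nat.eq_zero_or_pos j with rfl | hj1
    · exfalso
      have h0 : W.getVert i = W.getVert W.length := by
        rw [W.getVert_length]; rw [W.getVert_zero] at h; exact h
      have := key i W.length hi1 (by omega) (by omega) le_rfl h0
      omega
    · exact key i j hi1 (by omega) hj1 (by omega) h

/-- Cyclic indexing of the vertices of a closed walk. -/
def cyc {v : V} (W : G.Walk v v) (k : ℕ) : V := W.getVert (k % W.length)

lemma cyc_add_length {v : V} (W : G.Walk v v) (k : ℕ) : cyc W (k + W.length) = cyc W k := by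
  simp [cyc, Nat.add_mod_right]

lemma cyc_zero {v : V} (W : G.Walk v v) : cyc W 0 = v := by simp [cyc]

lemma cyc_eq_getVert {v : V} (W : G.Walk v v) {k : ℕ} (h : k < W.length) :
    cyc W k = W.getVert k := by simp [cyc, Nat.mod_eq_of_lt h]

lemma adj_cyc {v : V} (W : G.Walk v v) (hg2 : 2 ≤ W.length) (k : ℕ) :
    G.Adj (cyc W k) (cyc W (k+1)) := by
  set g := W.length with hgdef
  have hg : 0 < g := by omega
  have hr : k % g < g := Nat.mod_lt _ hg
  have hmod : (k+1) % g = (k % g + 1) % g := by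
    conv_lhs => rw [Nat.add_mod, Nat.mod_eq_of_lt (show 1 < g by omega)]
  by_cases h : k % g + 1 = g
  · have h2 : (k+1) % g = 0 := by rw [hmod, h, Nat.mod_self]
    have := W.adj_getVert_succ (i := k % g) (by omega)
    rw [h, W.getVert_length] at this
    show G.Adj (W.getVert (k % g)) (W.getVert ((k+1) % g))
    rw [h2, W.getVert_zero]; exact this
  · have h2 : (k+1) % g = k % g + 1 := by rw [hmod, Nat.mod_eq_of_lt (by omega)]
    have := W.adj_getVert_succ (i := k % g) (by omega)
    show G.Adj (W.getVert (k % g)) (W.getVert ((k+1) % g))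
    rw [h2]; exact this

lemma cyc_edge_eq {v : V} (W : G.Walk v v) (hg2 : 2 ≤ W.length) (k : ℕ) :
    s(cyc W k, cyc W (k+1)) = W.edges[k % W.length]'(by
      rw [W.length_edges]; exact Nat.mod_lt _ (by omega)) := by
  set g := W.length with hgdef
  have hg : 0 < g := by omega
  have hr : k % g < g := Nat.mod_lt _ hg
  rw [edges_getElem W (k % g) hr]
  have h1 : cyc W k = W.getVert (k % g) := rfl
  have hmod : (k+1) % g = (k % g + 1) % g := by
    conv_lhs => rw [Nat.add_mod, Nat.mod_eq_of_lt (show 1 < g by omega)]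
  have h2 : cyc W (k+1) = W.getVert (k % g + 1) := by
    by_cases h : k % g + 1 = g
    · have h2 : (k+1) % g = 0 := by rw [hmod, h, Nat.mod_self]
      rw [cyc, h2, W.getVert_zero, h, W.getVert_length]
    · have h2 : (k+1) % g = k % g + 1 := by rw [hmod, Nat.mod_eq_of_lt (by omega)]
      rw [cyc, h2]
  rw [h1, h2]

lemma cyc_edge_mem {v : V} (W : G.Walk v v) (hg2 : 2 ≤ W.length) (k : ℕ) :
    s(cyc W k, cyc W (k+1)) ∈ W.edges := by
  rw [cyc_edge_eq W hg2 k]; exact List.getElem_mem _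

lemma cyc_inj {v : V} {W : G.Walk v v} (hW : W.IsCycle) {j k : ℕ}
    (h : cyc W j = cyc W k) : j % W.length = k % W.length := by
  have hg : 0 < W.length := by have := hW.three_le_length; omega
  exact cycle_getVert_inj hW (Nat.mod_lt _ hg) (Nat.mod_lt _ hg) h

lemma cyc_edge_ne {v : V} {W : G.Walk v v} (hW : W.IsCycle) {j k : ℕ}
    (h : j % W.length ≠ k % W.length) :
    s(cyc W j, cyc W (j+1)) ≠ s(cyc W k, cyc W (k+1)) := by
  have hg : 3 ≤ W.length := hW.three_le_length
  rw [cyc_edge_eq W (by omega) j, cyc_edge_eq W (by omega) k]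
  intro hc
  exact h ((List.Nodup.getElem_inj_iff hW.edges_nodup).mp hc)

end DemAux


namespace DemAux
variable {V : Type*} {G : SimpleGraph V}
open SimpleGraph.Walk SimpleGraph

/-- Walk along a chain of adjacent vertices. -/
def chainWalk (H : SimpleGraph V) (f : ℕ → V) (a : ℕ) :
    (len : ℕ) → (∀ k, k < len → H.Adj (f (a+k)) (f (a+k+1))) → H.Walk (f a) (f (a+len))
  | 0, _ => SimpleGraph.Walk.nil
  | len+1, h => (chainWalk H f a len (fun k hk => h k (by omega))).concat (h len (by omega))

lemma chainWalk_length (H : SimpleGraph V) (f : ℕ → V) (a : ℕ) :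
    ∀ (len : ℕ) (h : ∀ k, k < len → H.Adj (f (a+k)) (f (a+k+1))),
      (chainWalk H f a len h).length = len := by
  intro len
  induction len with
  | zero => intro h; rfl
  | succ n ih => intro h; rw [chainWalk, SimpleGraph.Walk.length_concat, ih]

lemma chainWalk_support (H : SimpleGraph V) (f : ℕ → V) (a : ℕ) :
    ∀ (len : ℕ) (h : ∀ k, k < len → H.Adj (f (a+k)) (f (a+k+1))),
      (chainWalk H f a len h).support = (List.range (len+1)).map (fun k => f (a+k)) := by
  intro len
  induction len with
  | zero => intro h; simp [chainWalk, List.range_succ]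
  | succ n ih =>
    intro h
    rw [chainWalk, SimpleGraph.Walk.support_concat, ih, List.range_succ (n := n+1)]
    simp

lemma connected_deleteEdges {a b : V} (hG : G.Connected)
    (hr : (G.deleteEdges {s(a,b)}).Reachable a b) : (G.deleteEdges {s(a,b)}).Connected := by
  rw [connected_iff]
  refine ⟨?_, hG.nonempty⟩
  intro u w
  obtain ⟨p⟩ := hG.preconnected u w
  induction p with
  | nil => exact Reachable.refl _
  | @cons x y z hadj q ih =>
    refine Reachable.trans ?_ ih
    by_cases he : s(x,y) = s(a,b)
    · rw [Sym2.eq_iff] at he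
      rcases he with ⟨rfl, rfl⟩ | ⟨rfl, rfl⟩
      · exact hr
      · exact hr.symm
    · exact SimpleGraph.Adj.reachable (by rw [SimpleGraph.deleteEdges_adj]; exact ⟨hadj, by simpa using he⟩)

lemma ncard_eq_edgeFinset_card (H : SimpleGraph V) [Fintype H.edgeSet] :
    H.edgeSet.ncard = H.edgeFinset.card :=
  Set.ncard_eq_toFinset_card' _

lemma acyclic_of_card [Fintype V] :
    ∀ (k : ℕ) (H : SimpleGraph V), H.Connected → H.edgeSet.ncard = k →
      k + 1 ≤ Fintype.card V → H.IsAcyclic := by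
  intro k
  induction k using Nat.strong_induction_on with
  | _ k ih =>
    intro H hconn hcard hle
    by_contra hcyc
    simp only [SimpleGraph.IsAcyclic, not_forall, not_not] at hcyc
    obtain ⟨v, W, hW⟩ := hcyc
    have hg := hW.three_le_length
    have hadj : H.Adj (W.getVert 0) (W.getVert 1) := W.adj_getVert_succ (by omega)
    have hemem : s(W.getVert 0, W.getVert 1) ∈ W.edges := mem_edges_getVert W (by omega)
    have hrel : (H.deleteEdges {s(W.getVert 0, W.getVert 1)}).Reachable (W.getVert 0) (W.getVert 1) :=
      ((SimpleGraph.adj_and_reachable_delete_edges_iff_exists_cycle).mpr ⟨v, W, hW, hemem⟩).2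
    have hconn' := connected_deleteEdges hconn hrel
    have hein : s(W.getVert 0, W.getVert 1) ∈ H.edgeSet := W.edges_subset_edgeSet hemem
    have hfin : H.edgeSet.Finite := Set.toFinite _
    have hk1 : 1 ≤ k := by
      rw [← hcard]
      exact (Set.ncard_pos hfin).mpr ⟨_, hein⟩
    have hcard' : (H.deleteEdges {s(W.getVert 0, W.getVert 1)}).edgeSet.ncard = k - 1 := by
      rw [SimpleGraph.edgeSet_deleteEdges, Set.ncard_diff_singleton_of_mem hein, hcard]
    have hacyc := ih (k-1) (by omega) _ hconn' hcard' (by omega)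
    have htree : (H.deleteEdges {s(W.getVert 0, W.getVert 1)}).IsTree := ⟨hconn', hacyc⟩
    classical
    have hcnt := htree.card_edgeFinset
    rw [← ncard_eq_edgeFinset_card, hcard'] at hcnt
    omega

end DemAux


namespace DemAux
variable {V : Type*} {G : SimpleGraph V}
open SimpleGraph.Walk SimpleGraph

lemma length_le_of_acyclic {H : SimpleGraph V} (hA : H.IsAcyclic) {a b : V}
    {p : H.Walk a b} (hp : p.IsPath) (q : H.Walk a b) : p.length ≤ q.length := by
  classical
  have huniq := SimpleGraph.isAcyclic_iff_path_unique.mp hA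
    (⟨p, hp⟩ : H.Path a b) ⟨q.bypass, q.bypass_isPath⟩
  have hpq : p = q.bypass := congrArg Subtype.val huniq
  rw [hpq]
  exact q.length_bypass_le

lemma le_edist_of_forall {H : SimpleGraph V} {a b : V} {L : ℕ∞}
    (h : ∀ q : H.Walk a b, L ≤ q.length) : L ≤ H.edist a b := by
  rw [SimpleGraph.edist_eq_sInf]
  exact le_sInf (by rintro x ⟨q, rfl⟩; exact h q)

lemma monitors_incident {a b : V} (h : G.Adj a b) : monitors G a s(a,b) := by
  refine ⟨b, ?_⟩
  rw [SimpleGraph.edist_eq_one_iff_adj.mpr h]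
  intro hc
  have : (G.deleteEdges {s(a,b)}).Adj a b := SimpleGraph.edist_eq_one_iff_adj.mp hc.symm
  simp [SimpleGraph.deleteEdges_adj] at this

end DemAux


namespace DemAux
variable {V : Type*} {G : SimpleGraph V}
open SimpleGraph.Walk SimpleGraph

lemma mod_eq_absurd {g a b : ℕ} (h : a % g = b % g) (hab : a ≤ b)
    (h1 : 0 < b - a) (h2 : b - a < g) : False := by
  have hd : g ∣ b - a := (Nat.modEq_iff_dvd' hab).mp h
  have := Nat.le_of_dvd h1 hd
  omega

lemma cyc_mod {v : V} (W : G.Walk v v) (j : ℕ) : cyc W (j % W.length) = cyc W j := by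
  simp [cyc, Nat.mod_mod_of_dvd _ (dvd_refl _)]

lemma cyc_mod_succ {v : V} (W : G.Walk v v) (hg2 : 2 ≤ W.length) (j : ℕ) :
    cyc W (j % W.length + 1) = cyc W (j + 1) := by
  unfold cyc
  congr 1
  conv_rhs => rw [Nat.add_mod, Nat.mod_eq_of_lt (show 1 < W.length by omega)]

lemma edist_delete_eq_of_max {v : V} {W : G.Walk v v} (hW : W.IsCycle) (hG : G.Connected)
    (x : V) {i0 : ℕ} (hi0 : i0 < W.length)
    (hmax : ∀ j, j < W.length →
      G.edist x (cyc W j) + G.edist x (cyc W (j+1)) ≤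
        G.edist x (cyc W i0) + G.edist x (cyc W (i0+1))) (y : V) :
    (G.deleteEdges {s(cyc W i0, cyc W (i0+1))}).edist x y = G.edist x y := by
  have hg : 3 ≤ W.length := hW.three_le_length
  have hmax' : ∀ j, G.edist x (cyc W j) + G.edist x (cyc W (j+1)) ≤
      G.edist x (cyc W i0) + G.edist x (cyc W (i0+1)) := by
    intro j
    have h1 : cyc W (j % W.length) = cyc W j := cyc_mod W j
    have h2 : cyc W (j % W.length + 1) = cyc W (j + 1) := cyc_mod_succ W (by omega) j
    have := hmax (j % W.length) (Nat.mod_lt _ (by omega))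
    rwa [h1, h2] at this
  have key : ∀ (n : ℕ) (y : V), G.edist x y = n →
      ∃ q : (G.deleteEdges {s(cyc W i0, cyc W (i0+1))}).Walk x y, q.length = n := by
    intro n
    induction n with
    | zero =>
      intro y hy
      have : x = y := SimpleGraph.edist_eq_zero_iff.mp hy
      subst this
      exact ⟨SimpleGraph.Walk.nil, rfl⟩
    | succ n ihn =>
      intro y hy
      have hxy : x ≠ y := by
        intro h; subst h; rw [SimpleGraph.edist_self] at hy
        have : (n+1 : ℕ) = 0 := by exact_mod_cast hy.symm
        omega
      obtain ⟨w, hw⟩ := SimpleGraph.exists_walk_of_edist_eq_coe hy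
      obtain ⟨z, hyz, q, hq⟩ := SimpleGraph.Walk.exists_eq_cons_of_ne (Ne.symm hxy) w.reverse
      have hqlen : q.length = n := by
        have h1 : w.reverse.length = n + 1 := by rw [SimpleGraph.Walk.length_reverse, hw]
        rw [hq, SimpleGraph.Walk.length_cons] at h1
        omega
      have hz_le : G.edist x z ≤ (n : ℕ∞) := by
        have := SimpleGraph.edist_le q.reverse
        rwa [SimpleGraph.Walk.length_reverse, hqlen] at this
      have hz_netop : G.edist x z ≠ ⊤ := (hz_le.trans_lt (by simp)).ne
      have hz_eq : G.edist x z = (n : ℕ∞) := by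
        have htri : G.edist x y ≤ G.edist x z + G.edist z y :=
          SimpleGraph.edist_triangle
        have hzy : G.edist z y ≤ 1 := by
          have := SimpleGraph.edist_le (hyz.symm.toWalk)
          simpa using this
        lift G.edist x z to ℕ using hz_netop with k hk
        have h2 : ((n+1 : ℕ) : ℕ∞) ≤ (k : ℕ∞) + 1 := by
          rw [← hy]; exact le_trans htri (by gcongr)
        have h4 : n + 1 ≤ k + 1 := by exact_mod_cast h2
        have h5 : k ≤ n := by exact_mod_cast hz_le
        have : k = n := by omega
        exact_mod_cast this
      have finish : ∀ z' : V, G.Adj z' y → s(z', y) ≠ s(cyc W i0, cyc W (i0+1)) →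
          G.edist x z' = (n : ℕ∞) →
          ∃ q : (G.deleteEdges {s(cyc W i0, cyc W (i0+1))}).Walk x y, q.length = n + 1 := by
        intro z' hadj hne hdist
        obtain ⟨q', hq'⟩ := ihn z' hdist
        have hH : (G.deleteEdges {s(cyc W i0, cyc W (i0+1))}).Adj z' y := by
          rw [SimpleGraph.deleteEdges_adj]
          exact ⟨hadj, by simpa using hne⟩
        exact ⟨q'.concat hH, by rw [SimpleGraph.Walk.length_concat, hq']⟩
      by_cases hez : s(z, y) = s(cyc W i0, cyc W (i0+1))
      · rw [Sym2.eq_iff] at hez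
        rcases hez with ⟨hz1, hy1⟩ | ⟨hz1, hy1⟩
        · -- z = cyc W i0, y = cyc W (i0+1); use w' = cyc W (i0+2)
          have hadj12 : G.Adj (cyc W (i0+1)) (cyc W (i0+2)) := adj_cyc W (by omega) (i0+1)
          have hadjw : G.Adj (cyc W (i0+2)) y := by rw [hy1]; exact hadj12.symm
          have hEle : G.edist x (cyc W (i0+2)) ≤ (n : ℕ∞) := by
            have hD := hmax' (i0+1)
            rw [← hy1, ← hz1] at hD
            rw [hy, hz_eq] at hD
            push_cast at hD
            by_contra hcon
            push_neg at hcon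
            have h6 : ((n:ℕ∞)+1) + ((n:ℕ∞)+1) ≤ (n:ℕ∞) + ((n:ℕ∞)+1) :=
              le_trans (add_le_add_right (Order.add_one_le_of_lt hcon) _) hD
            have h7 : (n+1) + (n+1) ≤ n + (n+1) := by exact_mod_cast h6
            omega
          have hEge : (n : ℕ∞) ≤ G.edist x (cyc W (i0+2)) := by
            have htri : G.edist x y ≤ G.edist x (cyc W (i0+2)) + 1 := by
              refine le_trans (SimpleGraph.edist_triangle (v := cyc W (i0+2))) ?_
              gcongr
              simpa using SimpleGraph.edist_le hadjw.toWalk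
            rw [hy] at htri
            lift G.edist x (cyc W (i0+2)) to ℕ using (hEle.trans_lt (by simp)).ne with k hk
            have h8 : n + 1 ≤ k + 1 := by exact_mod_cast htri
            exact_mod_cast (by omega : n ≤ k)
          refine finish (cyc W (i0+2)) hadjw ?_ (le_antisymm hEle hEge)
          intro hc
          rw [hy1] at hc
          rw [Sym2.eq_iff] at hc
          rcases hc with ⟨h1, -⟩ | ⟨h1, h2⟩
          · exact mod_eq_absurd (cyc_inj hW h1.symm) (by omega) (by omega) (by omega)
          · exact (adj_cyc W (by omega) i0).ne' h2
        · -- z = cyc W (i0+1), y = cyc W i0; use w' = cyc W (i0+W.length-1)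
          have hadjw : G.Adj (cyc W (i0+W.length-1)) y := by
            have h0 := adj_cyc W (by omega) (i0+W.length-1)
            have h2 : i0 + W.length - 1 + 1 = i0 + W.length := by omega
            rw [h2, cyc_add_length W i0] at h0
            rw [hy1]
            exact h0
          have hEle : G.edist x (cyc W (i0+W.length-1)) ≤ (n : ℕ∞) := by
            have hD := hmax' (i0+W.length-1)
            have h2 : i0 + W.length - 1 + 1 = i0 + W.length := by omega
            rw [h2, cyc_add_length W i0] at hD
            rw [← hy1, ← hz1] at hD
            rw [hy, hz_eq] at hD
            push_cast at hD
            by_contra hcon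
            push_neg at hcon
            have h6 : ((n:ℕ∞)+1) + ((n:ℕ∞)+1) ≤ ((n:ℕ∞)+1) + (n:ℕ∞) :=
              le_trans (add_le_add_left (Order.add_one_le_of_lt hcon) _) hD
            have h7 : (n+1) + (n+1) ≤ (n+1) + n := by exact_mod_cast h6
            omega
          have hEge : (n : ℕ∞) ≤ G.edist x (cyc W (i0+W.length-1)) := by
            have htri : G.edist x y ≤ G.edist x (cyc W (i0+W.length-1)) + 1 := by
              refine le_trans (SimpleGraph.edist_triangle (v := cyc W (i0+W.length-1))) ?_
              gcongr
              simpa using SimpleGraph.edist_le hadjw.toWalk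
            rw [hy] at htri
            lift G.edist x (cyc W (i0+W.length-1)) to ℕ
              using (hEle.trans_lt (by simp)).ne with k hk
            have h8 : n + 1 ≤ k + 1 := by exact_mod_cast htri
            exact_mod_cast (by omega : n ≤ k)
          refine finish (cyc W (i0+W.length-1)) hadjw ?_ (le_antisymm hEle hEge)
          intro hc
          rw [hy1] at hc
          rw [Sym2.eq_iff] at hc
          rcases hc with ⟨h1, h2⟩ | ⟨h1, h2⟩
          · exact (adj_cyc W (by omega) i0).ne h2
          · exact mod_eq_absurd (cyc_inj hW h1.symm) (show i0+1 ≤ i0+W.length-1 by omega)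
              (by omega) (by omega)
      · exact finish z hyz.symm hez hz_eq
  have hne : G.edist x y ≠ ⊤ := by
    rw [SimpleGraph.edist_ne_top_iff_reachable]
    exact hG.preconnected x y
  lift G.edist x y to ℕ using hne with n hn
  obtain ⟨q, hq⟩ := key n y hn.symm
  refine le_antisymm ?_ ?_
  · calc (G.deleteEdges {s(cyc W i0, cyc W (i0+1))}).edist x y ≤ (q.length : ℕ∞) :=
        SimpleGraph.edist_le q
    _ = (n : ℕ∞) := by rw [hq]
  · rw [hn]
    exact SimpleGraph.edist_anti (SimpleGraph.deleteEdges_le _)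

end DemAux


namespace DemAux
variable {V : Type*} {G : SimpleGraph V}
open SimpleGraph.Walk SimpleGraph

lemma exists_unmonitored (hG : G.Connected) {v : V} (W : G.Walk v v) (hW : W.IsCycle)
    (x : V) : ∃ e ∈ G.edgeSet, ¬ monitors G x e := by
  have hg : 3 ≤ W.length := hW.three_le_length
  obtain ⟨i0, hi0mem, hmax⟩ := Finset.exists_max_image (Finset.range W.length)
    (fun j => G.edist x (cyc W j) + G.edist x (cyc W (j+1))) ⟨0, by simp; omega⟩
  rw [Finset.mem_range] at hi0mem
  refine ⟨s(cyc W i0, cyc W (i0+1)), W.edges_subset_edgeSet (cyc_edge_mem W (by omega) i0), ?_⟩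
  rintro ⟨y, hy⟩
  exact hy (edist_delete_eq_of_max hW hG x hi0mem
    (fun j hj => hmax j (Finset.mem_range.mpr hj)) y).symm

end DemAux


namespace DemAux
variable {V : Type*} {G : SimpleGraph V}
open SimpleGraph.Walk SimpleGraph

lemma monitors_cycle_edge [Fintype V] (hG : G.Connected)
    (huni : G.edgeSet.ncard = Fintype.card V) {v : V} {W : G.Walk v v} (hW : W.IsCycle)
    {a i : ℕ} (ha : a ≤ i) (hi : i < W.length) (hlt : 2 * (i+1) < 2 * a + W.length) :
    monitors G (cyc W a) s(cyc W i, cyc W (i+1)) := by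
  have hg : 3 ≤ W.length := hW.three_le_length
  have hn1 : 1 ≤ Fintype.card V := by
    have := hG.nonempty; exact Fintype.card_pos
  set T : SimpleGraph V := G.deleteEdges {s(cyc W i, cyc W (i+1))} with hTdef
  have hreach : T.Reachable (cyc W i) (cyc W (i+1)) :=
    ((SimpleGraph.adj_and_reachable_delete_edges_iff_exists_cycle).mpr
      ⟨v, W, hW, cyc_edge_mem W (by omega) i⟩).2
  have hTconn : T.Connected := connected_deleteEdges hG hreach
  have hein : s(cyc W i, cyc W (i+1)) ∈ G.edgeSet :=
    W.edges_subset_edgeSet (cyc_edge_mem W (by omega) i)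
  have hTcard : T.edgeSet.ncard = Fintype.card V - 1 := by
    rw [hTdef, SimpleGraph.edgeSet_deleteEdges, Set.ncard_diff_singleton_of_mem hein, huni]
  have hTacyc : T.IsAcyclic :=
    acyclic_of_card (Fintype.card V - 1) T hTconn hTcard (by omega)
  -- the long arc in T
  have hadjT : ∀ k, k < a + W.length - (i+1) →
      T.Adj (cyc W (i+1+k)) (cyc W (i+1+k+1)) := by
    intro k hk
    rw [hTdef, SimpleGraph.deleteEdges_adj]
    refine ⟨adj_cyc W (by omega) _, ?_⟩
    simp only [Set.mem_singleton_iff]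
    refine cyc_edge_ne hW ?_
    intro hmod
    rcases Nat.lt_or_ge (i+1+k) W.length with hlt2 | hge2
    · rw [Nat.mod_eq_of_lt hlt2, Nat.mod_eq_of_lt (by omega : i < W.length)] at hmod
      omega
    · have h2 : (i+1+k) % W.length = i+1+k - W.length := by
        rw [Nat.mod_eq_sub_mod hge2, Nat.mod_eq_of_lt (by omega)]
      rw [h2, Nat.mod_eq_of_lt (by omega : i < W.length)] at hmod
      omega
  set len : ℕ := a + W.length - (i+1) with hlendef
  have hidx : i+1+len = a + W.length := by omega
  have hend : cyc W (i+1+len) = cyc W a := by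
    rw [hidx, cyc_add_length]
  set arc : T.Walk (cyc W (i+1)) (cyc W a) :=
    (chainWalk T (cyc W) (i+1) len hadjT).copy rfl hend with harcdef
  have harclen : arc.length = len := by
    rw [harcdef, SimpleGraph.Walk.length_copy, chainWalk_length]
  have harcpath : arc.IsPath := by
    rw [SimpleGraph.Walk.isPath_def, harcdef, SimpleGraph.Walk.support_copy,
      chainWalk_support]
    refine List.Nodup.map_on ?_ List.nodup_range
    intro k1 hk1 k2 hk2 hkeq
    rw [List.mem_range] at hk1 hk2
    by_contra hne
    have hmod := cyc_inj hW hkeq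
    rcases Nat.lt_or_ge k1 k2 with hlt2 | hge2
    · exact mod_eq_absurd hmod (by omega) (by omega) (by omega)
    · exact mod_eq_absurd hmod.symm (by omega) (by omega) (by omega)
  -- lower bound on T-distance
  have hTlower : (len : ℕ∞) ≤ T.edist (cyc W a) (cyc W (i+1)) := by
    refine le_edist_of_forall ?_
    intro q
    have := length_le_of_acyclic hTacyc (harcpath.reverse) q
    rw [SimpleGraph.Walk.length_reverse, harclen] at this
    exact_mod_cast this
  -- upper bound on G-distance
  have hGupper : G.edist (cyc W a) (cyc W (i+1)) ≤ ((i+1-a : ℕ) : ℕ∞) := by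
    have hidx2 : a + (i+1-a) = i+1 := by omega
    have hend2 : cyc W (a + (i+1-a)) = cyc W (i+1) := by rw [hidx2]
    have hwl : ((chainWalk G (cyc W) a (i+1-a)
        (fun k _ => adj_cyc W (by omega) _)).copy rfl hend2).length = i+1-a := by
      rw [SimpleGraph.Walk.length_copy, chainWalk_length]
    calc G.edist (cyc W a) (cyc W (i+1))
        ≤ (((chainWalk G (cyc W) a (i+1-a)
            (fun k _ => adj_cyc W (by omega) _)).copy rfl hend2).length : ℕ∞) :=
          SimpleGraph.edist_le _
    _ = ((i+1-a : ℕ) : ℕ∞) := by rw [hwl]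
  refine ⟨cyc W (i+1), ne_of_lt ?_⟩
  calc G.edist (cyc W a) (cyc W (i+1)) ≤ ((i+1-a : ℕ) : ℕ∞) := hGupper
  _ < (len : ℕ∞) := by exact_mod_cast (by omega : i+1-a < len)
  _ ≤ T.edist (cyc W a) (cyc W (i+1)) := hTlower

lemma bridge_monitored [Fintype V] (hG : G.Connected)
    (huni : G.edgeSet.ncard = Fintype.card V) {v : V} {W : G.Walk v v} (hW : W.IsCycle)
    {e : Sym2 V} (he : e ∈ G.edgeSet) (heW : e ∉ W.edges) (x : V) : monitors G x e := by
  have hn1 : 1 ≤ Fintype.card V := by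
    have := hG.nonempty; exact Fintype.card_pos
  have hnotconn : ¬ (G.deleteEdges {e}).Connected := by
    intro hc
    have hcard : (G.deleteEdges {e}).edgeSet.ncard = Fintype.card V - 1 := by
      rw [SimpleGraph.edgeSet_deleteEdges, Set.ncard_diff_singleton_of_mem he, huni]
    have hacyc := acyclic_of_card (Fintype.card V - 1) _ hc hcard (by omega)
    have hWT : ∀ f ∈ W.edges, f ∈ (G.deleteEdges {e}).edgeSet := by
      intro f hf
      rw [SimpleGraph.edgeSet_deleteEdges]
      exact ⟨W.edges_subset_edgeSet hf, by
        simp only [Set.mem_singleton_iff]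
        rintro rfl
        exact heW hf⟩
    exact hacyc (W.transfer _ hWT) (hW.transfer hWT)
  have hex : ∃ y, ¬ (G.deleteEdges {e}).Reachable x y := by
    by_contra hall
    push_neg at hall
    exact hnotconn ((SimpleGraph.connected_iff _).mpr
      ⟨fun a b => ((hall a).symm.trans (hall b)), hG.nonempty⟩)
  obtain ⟨y, hy⟩ := hex
  refine ⟨y, ?_⟩
  rw [SimpleGraph.edist_eq_top_of_not_reachable hy]
  exact SimpleGraph.edist_ne_top_iff_reachable.mpr (hG.preconnected x y)

end DemAux


namespace DemAux
variable {V : Type*} {G : SimpleGraph V}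
open SimpleGraph.Walk SimpleGraph

lemma isDEMSet_pair [Fintype V] (hG : G.Connected)
    (huni : G.edgeSet.ncard = Fintype.card V) {v : V} {W : G.Walk v v} (hW : W.IsCycle) :
    IsDEMSet G {cyc W 0, cyc W (W.length / 2)} := by
  intro e he
  have hg : 3 ≤ W.length := hW.three_le_length
  have hm2 : 2 * (W.length / 2) ≥ W.length - 1 := by omega
  have hm3 : 2 * (W.length / 2) ≤ W.length := by omega
  by_cases heW : e ∈ W.edges
  · obtain ⟨i, hi, rfl⟩ := (mem_edges_iff W).mp heW
    have hvi : W.getVert i = cyc W i := (cyc_eq_getVert W hi).symm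
    have hvi1 : W.getVert (i+1) = cyc W (i+1) := by
      rcases Nat.lt_or_ge (i+1) W.length with h | h
      · exact (cyc_eq_getVert W h).symm
      · have h1 : i + 1 = W.length := by omega
        have h3 : cyc W W.length = v := by
          rw [show W.length = 0 + W.length by omega, cyc_add_length, cyc_zero]
        rw [h1, W.getVert_length, h3]
    rw [hvi, hvi1]
    by_cases h0 : i = 0
    · subst h0
      exact ⟨cyc W 0, Set.mem_insert _ _, monitors_incident (adj_cyc W (by omega) 0)⟩
    by_cases hgm1 : i = W.length - 1
    · have hiw : cyc W (i+1) = cyc W 0 := by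
        rw [hgm1, show W.length - 1 + 1 = 0 + W.length by omega, cyc_add_length]
      rw [hiw, Sym2.eq_swap]
      refine ⟨cyc W 0, Set.mem_insert _ _, monitors_incident ?_⟩
      have := adj_cyc W (by omega) i
      rw [hiw] at this
      exact this.symm
    by_cases hm1 : i = W.length / 2 - 1
    · have hiw : i + 1 = W.length / 2 := by omega
      rw [hiw, Sym2.eq_swap]
      refine ⟨cyc W (W.length / 2), Set.mem_insert_of_mem _ rfl, monitors_incident ?_⟩
      have := adj_cyc W (by omega) i
      rw [hiw] at this
      exact this.symm
    by_cases hm : i = W.length / 2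
    · subst hm
      exact ⟨cyc W (W.length / 2), Set.mem_insert_of_mem _ rfl,
        monitors_incident (adj_cyc W (by omega) _)⟩
    rcases Nat.lt_or_ge i (W.length / 2) with hB | hC
    · exact ⟨cyc W 0, Set.mem_insert _ _,
        monitors_cycle_edge hG huni hW (by omega) hi (by omega)⟩
    · exact ⟨cyc W (W.length / 2), Set.mem_insert_of_mem _ rfl,
        monitors_cycle_edge hG huni hW (by omega) hi (by omega)⟩
  · exact ⟨cyc W 0, Set.mem_insert _ _, bridge_monitored hG huni hW he heW _⟩

end DemAux


theorem stmt14 {V : Type*} [Fintype V] (G : SimpleGraph V) (hG : G.Connected)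
    (huni : G.edgeSet.ncard = Fintype.card V) :
    dem V G = 2 := by
  classical
  have hn1 : 1 ≤ Fintype.card V := by
    have := hG.nonempty; exact Fintype.card_pos
  have hnotacyc : ¬ G.IsAcyclic := by
    intro ha
    have htree : G.IsTree := ⟨hG, ha⟩
    have hc := htree.card_edgeFinset
    rw [← DemAux.ncard_eq_edgeFinset_card, huni] at hc
    omega
  simp only [SimpleGraph.IsAcyclic, not_forall, not_not] at hnotacyc
  obtain ⟨v, W, hW⟩ := hnotacyc
  have hg : 3 ≤ W.length := hW.three_le_length
  have hne : DemAux.cyc W 0 ≠ DemAux.cyc W (W.length / 2) := by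
    intro h
    have h2 := DemAux.cyc_inj hW h
    rw [Nat.mod_eq_of_lt (by omega), Nat.mod_eq_of_lt (by omega)] at h2
    omega
  have h2mem : 2 ∈ {k | ∃ M : Finset V, M.card = k ∧ IsDEMSet G ↑M} := by
    refine ⟨{DemAux.cyc W 0, DemAux.cyc W (W.length / 2)}, ?_, ?_⟩
    · rw [Finset.card_insert_of_notMem (by simpa using hne), Finset.card_singleton]
    · have hpair := DemAux.isDEMSet_pair hG huni hW
      have hcoe : (({DemAux.cyc W 0, DemAux.cyc W (W.length / 2)} : Finset V) : Set V)
          = ({DemAux.cyc W 0, DemAux.cyc W (W.length / 2)} : Set V) := by simp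
      rw [hcoe]
      exact hpair
  have hlb : ∀ k ∈ {k | ∃ M : Finset V, M.card = k ∧ IsDEMSet G ↑M}, 2 ≤ k := by
    rintro k ⟨M, hMcard, hMdem⟩
    by_contra hk
    push_neg at hk
    interval_cases k
    · rw [Finset.card_eq_zero] at hMcard
      subst hMcard
      have hEne : G.edgeSet.Nonempty := by
        refine (Set.ncard_pos (Set.toFinite _)).mp ?_
        omega
      obtain ⟨e, heE⟩ := hEne
      obtain ⟨x, hx, -⟩ := hMdem e heE
      simp at hx
    · rw [Finset.card_eq_one] at hMcard
      obtain ⟨x, rfl⟩ := hMcard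
      obtain ⟨e, heE, hnm⟩ := DemAux.exists_unmonitored hG W hW x
      obtain ⟨x', hx', hmon⟩ := hMdem e heE
      simp only [Finset.coe_singleton, Set.mem_singleton_iff] at hx'
      subst hx'
      exact hnm hmon
  exact le_antisymm (Nat.sInf_le h2mem) (le_csInf ⟨2, h2mem⟩ hlb)
end

section
/- A set M of vertices of a connected graph G is a strong distance-edge-monitoring set if and only if M is a vertex cover of G. -/
open SimpleGraph

/-- The set `P(M, E)` for a set `E` of deleted edges. -/
def pairsE {V : Type*} (G : SimpleGraph V) (M : Set V) (E : Set (Sym2 V)) : Set (V × V) :=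
  {p | p.1 ∈ M ∧ G.edist p.1 p.2 ≠ (G.deleteEdges E).edist p.1 p.2}

/-- `M` is a strong distance-edge-monitoring set of `G`. -/
def IsStrongDEMSet {V : Type*} (G : SimpleGraph V) (M : Set V) : Prop :=
  IsDEMSet G M ∧
  ∀ E₁ E₂ : Set (Sym2 V), E₁ ⊆ G.edgeSet → E₂ ⊆ G.edgeSet → E₁ ≠ E₂ →
    pairsE G M E₁ ≠ pairsE G M E₂

private lemma walk_closed {V : Type*} {H : SimpleGraph V} {u v : V}
    (hu : ∀ z, H.Adj u z → z = v) (hv : ∀ z, H.Adj v z → z = u) :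
    ∀ {a z : V}, H.Walk a z → (a = u ∨ a = v) → (z = u ∨ z = v) := by
  intro a z p
  induction p with
  | nil => exact id
  | @cons a b z hab p ih =>
    rintro (rfl | rfl)
    · exact ih (Or.inr (hu _ hab))
    · exact ih (Or.inl (hv _ hab))

private lemma edist_delete_eq {V : Type*} {H : SimpleGraph V} {u v : V}
    (hu : ∀ z, H.Adj u z → z = v) (hv : ∀ z, H.Adj v z → z = u)
    {x : V} (hxu : x ≠ u) (hxv : x ≠ v) (y : V) :
    H.edist x y = (H.deleteEdges {s(u, v)}).edist x y := by
  classical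
  refine le_antisymm (edist_anti (deleteEdges_le _)) ?_
  rcases em (H.Reachable x y) with hr | hr
  · obtain ⟨p, hp⟩ := hr.exists_walk_length_eq_edist
    by_cases hy : y = u ∨ y = v
    · exfalso
      rcases walk_closed hv hu p.reverse hy.symm with rfl | rfl
      · exact hxv rfl
      · exact hxu rfl
    · push_neg at hy
      have hne : ∀ f ∈ p.edges, f ∉ ({s(u, v)} : Set (Sym2 V)) := by
        intro f hf hfe
        rw [Set.mem_singleton_iff] at hfe
        subst hfe
        have hus : u ∈ p.support := p.fst_mem_support_of_mem_edges hf
        rcases walk_closed hu hv (p.dropUntil u hus) (Or.inl rfl) with h | h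
        · exact hy.1 h
        · exact hy.2 h
      calc (H.deleteEdges {s(u, v)}).edist x y
          ≤ (p.toDeleteEdges {s(u, v)} hne).length := edist_le _
        _ = (p.length : ℕ∞) := by rw [Walk.length_transfer]
        _ = H.edist x y := hp
  · rw [edist_eq_top_of_not_reachable hr]
    exact le_top

private lemma edist_ne_delete {V : Type*} {G : SimpleGraph V} {u v : V}
    (h : G.Adj u v) {E : Set (Sym2 V)} (hE : s(u, v) ∈ E) :
    G.edist u v ≠ (G.deleteEdges E).edist u v := by
  rw [edist_eq_one_iff_adj.mpr h]
  intro heq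
  have h2 := edist_eq_one_iff_adj.mp heq.symm
  rw [deleteEdges_adj] at h2
  exact h2.2 hE

private lemma pairs_ne {V : Type*} {G : SimpleGraph V} {M : Set V} {u v : V}
    (h : G.Adj u v) (hu : u ∈ M)
    {E₁ E₂ : Set (Sym2 V)} (h1 : s(u, v) ∈ E₁) (h2 : s(u, v) ∉ E₂) :
    pairsE G M E₁ ≠ pairsE G M E₂ := by
  intro heq
  have hmem : (u, v) ∈ pairsE G M E₁ := ⟨hu, edist_ne_delete h h1⟩
  rw [heq] at hmem
  refine hmem.2 ?_
  rw [edist_eq_one_iff_adj.mpr h]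
  exact (edist_eq_one_iff_adj.mpr (deleteEdges_adj.mpr ⟨h, h2⟩)).symm

theorem stmt19 {V : Type*} [Fintype V] (G : SimpleGraph V) (hG : G.Connected) (M : Set V) :
    IsStrongDEMSet G M ↔ IsVC G M := by
  constructor
  · rintro ⟨-, hs⟩
    intro e
    induction e using Sym2.ind with
    | _ u v =>
      intro he
      rw [mem_edgeSet] at he
      by_contra hc
      push_neg at hc
      set E₂ : Set (Sym2 V) := {f | f ∈ G.edgeSet ∧ (u ∈ f ∨ v ∈ f) ∧ f ≠ s(u, v)} with hE₂
      set E₁ : Set (Sym2 V) := insert s(u, v) E₂ with hE₁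
      have heE₂ : s(u, v) ∉ E₂ := fun hf => hf.2.2 rfl
      have hne : E₁ ≠ E₂ := by
        intro hq
        exact heE₂ (hq ▸ Set.mem_insert _ _)
      have hsub₂ : E₂ ⊆ G.edgeSet := fun f hf => hf.1
      have hsub₁ : E₁ ⊆ G.edgeSet := by
        rintro f (rfl | hf)
        · exact he
        · exact hf.1
      refine hs E₁ E₂ hsub₁ hsub₂ hne ?_
      have hdel : G.deleteEdges E₁ = (G.deleteEdges E₂).deleteEdges {s(u, v)} := by
        rw [deleteEdges_deleteEdges, hE₁]
        congr 1
        rw [Set.union_comm]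
        rfl
      have hu : ∀ z, (G.deleteEdges E₂).Adj u z → z = v := by
        intro z hz
        rw [deleteEdges_adj] at hz
        by_contra hzv
        refine hz.2 ⟨hz.1, Or.inl (Sym2.mem_mk_left u z), fun hq => ?_⟩
        rw [Sym2.eq_iff] at hq
        rcases hq with ⟨-, rfl⟩ | ⟨rfl, rfl⟩
        · exact hzv rfl
        · exact G.irrefl he
      have hv : ∀ z, (G.deleteEdges E₂).Adj v z → z = u := by
        intro z hz
        rw [deleteEdges_adj] at hz
        by_contra hzu
        refine hz.2 ⟨hz.1, Or.inr (Sym2.mem_mk_left v z), fun hq => ?_⟩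
        rw [Sym2.eq_iff] at hq
        rcases hq with ⟨rfl, rfl⟩ | ⟨-, rfl⟩
        · exact G.irrefl he
        · exact hzu rfl
      ext ⟨x, y⟩
      simp only [pairsE, Set.mem_setOf_eq]
      refine and_congr_right fun hx => ?_
      have hxuv := hc x hx
      rw [Sym2.mem_iff] at hxuv
      push_neg at hxuv
      rw [hdel, ← edist_delete_eq hu hv hxuv.1 hxuv.2 y]
  · intro hvc
    constructor
    · intro e
      induction e using Sym2.ind with
      | _ u v =>
        intro he
        have hadj := (G.mem_edgeSet).mp he
        obtain ⟨w, hwM, hwe⟩ := hvc _ he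
        rw [Sym2.mem_iff] at hwe
        rcases hwe with rfl | rfl
        · exact ⟨_, hwM, v, edist_ne_delete hadj rfl⟩
        · exact ⟨_, hwM, u, edist_ne_delete hadj.symm (by rw [Sym2.eq_swap]; exact rfl)⟩
    · intro E₁ E₂ h1 h2 hne
      obtain ⟨e, hmem⟩ := Set.symmDiff_nonempty.mpr hne
      rw [Set.mem_symmDiff] at hmem
      rcases hmem with ⟨he1, he2⟩ | ⟨he2, he1⟩
      · have hadj := h1 he1
        induction e using Sym2.ind with
        | _ u v =>
          have he' := hadj
          rw [mem_edgeSet] at hadj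
          obtain ⟨w, hwM, hwe⟩ := hvc _ he'
          rw [Sym2.mem_iff] at hwe
          rcases hwe with rfl | rfl
          · exact pairs_ne hadj hwM he1 he2
          · exact pairs_ne hadj.symm hwM (by rwa [Sym2.eq_swap]) (by rwa [Sym2.eq_swap])
      · have hadj := h2 he2
        refine (?_ : pairsE G M E₂ ≠ pairsE G M E₁).symm
        induction e using Sym2.ind with
        | _ u v =>
          have he' := hadj
          rw [mem_edgeSet] at hadj
          obtain ⟨w, hwM, hwe⟩ := hvc _ he'
          rw [Sym2.mem_iff] at hwe
          rcases hwe with rfl | rfl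
          · exact pairs_ne hadj hwM he2 he1
          · exact pairs_ne hadj.symm hwM (by rwa [Sym2.eq_swap]) (by rwa [Sym2.eq_swap])
end
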